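/- arXiv:1210.2214 — 5 statements merged into one kernel-verified Lean document; each statement's English description precedes it below -/
import Mathlib

section
/- Let 0 ≤ m ≤ n, a_i ≥ 1 for 1 ≤ i ≤ n, b_i ≥ a_i for 1 ≤ i ≤ m. Then the Stanley conjecture holds for (x_1^{a_1},...,x_n^{a_n})/(x_1^{b_1},...,x_m^{b_m}): its Stanley depth is at least its depth. (The depth equals 1 if m < n and 0 if m = n.) -/
/- Combinatorial formalization of Stanley depth for quotients `J/I` of monomial
ideals in `S = K[x_1,...,x_n]`: monomials are identified with their exponent
vectors in `Fin n → ℕ`, the `ℤⁿ`-graded module `J/I` is identified with the set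
of exponent vectors of monomials in `J \ I`, and a Stanley decomposition
`⊕ uᵢ K[Zᵢ]` is identified with a partition of this set into "intervals"
`{b | aᵢ ≤ b ∧ (b = aᵢ outside Zᵢ)}` (the exponent set of `x^{aᵢ} K[Zᵢ]`).
This correspondence is exact and the resulting Stanley depth is independent of
the field `K`. `sdepthOn V M` is the Stanley depth of `M` as a module over the
polynomial subring on the variables in `V` (e.g. `S' = K[x_2,...,x_n]`). -/

/-- The set of exponent vectors of the Stanley space `x^a · K[Z]`. -/
def SInterval {n : ℕ} (a : Fin n → ℕ) (Z : Finset (Fin n)) : Set (Fin n → ℕ) :=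
  {b | a ≤ b ∧ ∀ i ∉ Z, b i = a i}

/-- A (combinatorial) Stanley decomposition of the set `M` of exponent vectors,
using only variables from `V`. -/
def IsStanleyDecompOn {n : ℕ} (V : Finset (Fin n)) (M : Set (Fin n → ℕ)) {r : ℕ}
    (a : Fin r → Fin n → ℕ) (Z : Fin r → Finset (Fin n)) : Prop :=
  (∀ i, Z i ⊆ V) ∧ (∀ i, SInterval (a i) (Z i) ⊆ M) ∧
    (∀ x ∈ M, ∃ i, x ∈ SInterval (a i) (Z i)) ∧
    ∀ i j, i ≠ j → Disjoint (SInterval (a i) (Z i)) (SInterval (a j) (Z j))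

/-- The Stanley depth of `M`, viewed over the polynomial ring on the variables in `V`. -/
noncomputable def sdepthOn {n : ℕ} (V : Finset (Fin n)) (M : Set (Fin n → ℕ)) : ℕ :=
  sSup {d | ∃ (r : ℕ), 0 < r ∧ ∃ (a : Fin r → Fin n → ℕ) (Z : Fin r → Finset (Fin n)),
    IsStanleyDecompOn V M a Z ∧ ∀ i, d ≤ (Z i).card}

/-- The Stanley depth over the full polynomial ring `S = K[x_1,...,x_n]`. -/
noncomputable def sdepth {n : ℕ} (M : Set (Fin n → ℕ)) : ℕ := sdepthOn Finset.univ M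

/-- Exponent vectors of the monomial ideal generated by the monomials `x^a`, `a ∈ A`. -/
def upSet {n : ℕ} (A : Set (Fin n → ℕ)) : Set (Fin n → ℕ) := {c | ∃ a ∈ A, a ≤ c}

/-- `M` is the set of exponent vectors of the monomials of a monomial ideal. -/
def IsMonomialIdealSet {n : ℕ} (M : Set (Fin n → ℕ)) : Prop :=
  ∀ a ∈ M, ∀ b, a ≤ b → b ∈ M

/-- All monomials of `M` only involve the variables in `V`. -/
def SupportedOn {n : ℕ} (V : Finset (Fin n)) (M : Set (Fin n → ℕ)) : Prop :=
  ∀ c ∈ M, ∀ i ∉ V, c i = 0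

/-- The support of a monomial. -/
def msupp {n : ℕ} (u : Fin n → ℕ) : Finset (Fin n) :=
  Finset.univ.filter fun i => u i ≠ 0

/-- A regular sequence of monomials: monic nonunit monomials with pairwise
disjoint supports. -/
def IsRegSeqM {n m : ℕ} (u : Fin m → Fin n → ℕ) : Prop :=
  (∀ j, u j ≠ 0) ∧ ∀ j k, j ≠ k → Disjoint (msupp (u j)) (msupp (u k))

/-! The module is `{c | c ≥ a at some coordinate} \ {c | c ≥ b at some coordinate below m}`, so
its coordinates `i < m` are bounded while the coordinates `i ≥ m` are only bounded below. Let `j`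
be the first coordinate with `a j ≤ c j`. Every monomial `c` lies in the Stanley space that keeps
`c` at the coordinates below `max m j` and lets all coordinates `i ≥ max m j` run freely above
`a j` (at `j`) or `0` (elsewhere). These spaces are rigid (every element of the space determines
the same space), so they partition the module; their corners are bounded by `a + b`, so there are
finitely many; and each has a free variable when `m < n`. -/

section Retraction

variable {n : ℕ} {V : Finset (Fin n)} {M : Set (Fin n → ℕ)}

theorem le_sdepthOn_of_isStanleyDecompOn {r : ℕ} (hr : 0 < r) {A : Fin r → Fin n → ℕ}
    {Z : Fin r → Finset (Fin n)} (hdec : IsStanleyDecompOn V M A Z) {d : ℕ}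
    (hd : ∀ i, d ≤ (Z i).card) : d ≤ sdepthOn V M := by
  refine le_csSup ⟨n, ?_⟩ ⟨r, hr, A, Z, hdec, hd⟩
  rintro d' ⟨r', hr', -, Z', -, hd'⟩
  simpa using (hd' ⟨0, hr'⟩).trans (Z' ⟨0, hr'⟩).card_le_univ

theorem le_sdepthOn_of_retraction (base : (Fin n → ℕ) → Fin n → ℕ)
    (Z : (Fin n → ℕ) → Finset (Fin n)) (hM : M.Nonempty) (hfin : (base '' M).Finite)
    (hZV : ∀ c ∈ M, Z c ⊆ V) (hmem : ∀ c ∈ M, c ∈ SInterval (base c) (Z c))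
    (hsub : ∀ c ∈ M, SInterval (base c) (Z c) ⊆ M)
    (hrigid : ∀ c ∈ M, ∀ x ∈ SInterval (base c) (Z c), base x = base c ∧ Z x = Z c)
    {d : ℕ} (hd : ∀ c ∈ M, d ≤ (Z c).card) : d ≤ sdepthOn V M := by
  have hfix : ∀ c ∈ M, base (base c) = base c ∧ Z (base c) = Z c := fun c hc =>
    hrigid c hc _ ⟨le_rfl, fun _ _ => rfl⟩
  let T := hfin.toFinset
  let A : Fin T.card → Fin n → ℕ := fun k => T.equivFin.symm k
  have hA : ∀ k, ∃ c ∈ M, A k = base c ∧ Z (A k) = Z c := fun k => by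
    obtain ⟨c, hc, hk⟩ := hfin.mem_toFinset.1 (T.equivFin.symm k).2
    change base c = A k at hk
    exact ⟨c, hc, hk.symm, hk ▸ (hfix c hc).2⟩
  refine le_sdepthOn_of_isStanleyDecompOn (Finset.card_pos.2 (by simpa [T] using hM.image base))
    (A := A) (Z := fun k => Z (A k)) ⟨fun k => ?_, fun k => ?_, fun x hx => ?_, ?_⟩ fun k => ?_
  · obtain ⟨c, hc, -, hZ⟩ := hA k
    dsimp only
    rw [hZ]
    exact hZV c hc
  · obtain ⟨c, hc, hk, hZ⟩ := hA k
    dsimp only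
    rw [hZ, hk]
    exact hsub c hc
  · refine ⟨T.equivFin ⟨base x, hfin.mem_toFinset.2 ⟨x, hx, rfl⟩⟩, ?_⟩
    simpa only [A, Equiv.symm_apply_apply, (hfix x hx).2] using hmem x hx
  · intro k k' hkk'
    obtain ⟨c, hc, hk, hZ⟩ := hA k
    obtain ⟨c', hc', hk', hZ'⟩ := hA k'
    refine Set.disjoint_left.2 fun y hy hy' => hkk' (T.equivFin.symm.injective (Subtype.ext ?_))
    dsimp only at hy hy'
    rw [hZ, hk] at hy
    rw [hZ', hk'] at hy'
    change A k = A k'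
    rw [hk, hk', ← (hrigid c hc y hy).1, ← (hrigid c' hc' y hy').1]
  · obtain ⟨c, hc, -, hZ⟩ := hA k
    rw [hZ]
    exact hd c hc

end Retraction

namespace MonomialQuotient

open Finset

variable {n : ℕ} (m : ℕ) (a b : Fin n → ℕ)

def quotSet : Set (Fin n → ℕ) :=
  {c | ∃ i, a i ≤ c i} \ {c | ∃ i : Fin n, (i : ℕ) < m ∧ b i ≤ c i}

variable {m a b}

theorem mem_quotSet {c : Fin n → ℕ} :
    c ∈ quotSet m a b ↔ (∃ i, a i ≤ c i) ∧ ∀ i : Fin n, (i : ℕ) < m → c i < b i := by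
  simp [quotSet]

theorem quotSet_nonempty (hmn : m < n) (ha : ∀ i, 1 ≤ a i)
    (hab : ∀ i : Fin n, (i : ℕ) < m → a i ≤ b i) : (quotSet m a b).Nonempty := by
  refine ⟨fun i => if (i : ℕ) < m then 0 else a i, mem_quotSet.2 ⟨⟨⟨m, hmn⟩, by simp⟩, ?_⟩⟩
  intro i hi
  simp only [hi, if_true]
  linarith [ha i, hab i hi]

variable [NeZero n]

variable (a) in
/-- The first coordinate at which `c` reaches `a` (junk value `0` if there is none). -/
def firstReach (c : Fin n → ℕ) : Fin n :=
  if h : (univ.filter fun i => a i ≤ c i).Nonempty then (univ.filter fun i => a i ≤ c i).min' h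
  else 0

variable {c x : Fin n → ℕ}

theorem le_apply_firstReach (hc : ∃ i, a i ≤ c i) : a (firstReach a c) ≤ c (firstReach a c) := by
  obtain ⟨i, hi⟩ := hc
  have hne : (univ.filter fun i => a i ≤ c i).Nonempty := ⟨i, by simpa using hi⟩
  rw [firstReach, dif_pos hne]
  simpa using min'_mem _ hne

theorem firstReach_le {i : Fin n} (hi : a i ≤ c i) : firstReach a c ≤ i := by
  have hne : (univ.filter fun i => a i ≤ c i).Nonempty := ⟨i, by simpa using hi⟩
  rw [firstReach, dif_pos hne]
  exact min'_le _ _ (by simpa using hi)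

theorem apply_lt_of_lt_firstReach {i : Fin n} (hi : i < firstReach a c) : c i < a i :=
  lt_of_not_ge fun h => (firstReach_le h).not_gt hi

theorem firstReach_eq_of_forall_lt {j : Fin n} (hj : a j ≤ x j) (hlt : ∀ i < j, x i < a i) :
    firstReach a x = j :=
  (firstReach_le hj).antisymm <| not_lt.1 fun h =>
    (hlt _ h).not_ge (le_apply_firstReach ⟨j, hj⟩)

variable (m a) in
def decompVars (c : Fin n → ℕ) : Finset (Fin n) :=
  univ.filter fun i => m ≤ (i : ℕ) ∧ firstReach a c ≤ i

variable (m a) in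
def decompBase (c : Fin n → ℕ) : Fin n → ℕ := fun i =>
  if i ∈ decompVars m a c then (if i = firstReach a c then a i else 0) else c i

theorem decompBase_of_notMem {i : Fin n} (hi : i ∉ decompVars m a c) :
    decompBase m a c i = c i := by
  simp [decompBase, hi]

theorem notMem_decompVars_of_lt {i : Fin n} (hi : (i : ℕ) < m) : i ∉ decompVars m a c :=
  fun h => (mem_filter.1 h).2.1.not_gt hi

theorem notMem_decompVars_of_lt_firstReach {i : Fin n} (hi : i < firstReach a c) :
    i ∉ decompVars m a c := by
  simp [decompVars, hi]

theorem le_decompBase_firstReach (hc : ∃ i, a i ≤ c i) :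
    a (firstReach a c) ≤ decompBase m a c (firstReach a c) := by
  by_cases hj : firstReach a c ∈ decompVars m a c
  · simp [decompBase, hj]
  · rw [decompBase_of_notMem hj]
    exact le_apply_firstReach hc

theorem decompBase_le (hc : ∃ i, a i ≤ c i) : decompBase m a c ≤ c := by
  intro i
  unfold decompBase
  split_ifs with hZ hj
  · exact hj ▸ le_apply_firstReach hc
  · exact Nat.zero_le _
  · exact le_rfl

theorem decompBase_le_add (hc : c ∈ quotSet m a b) (i : Fin n) :
    decompBase m a c i ≤ a i + b i := by
  by_cases hZ : i ∈ decompVars m a c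
  · simp only [decompBase, hZ, if_true]
    split_ifs <;> omega
  · rw [decompBase_of_notMem hZ]
    by_cases him : (i : ℕ) < m
    · linarith [(mem_quotSet.1 hc).2 i him]
    · have hlt : i < firstReach a c :=
        lt_of_not_ge fun h => hZ (mem_filter.2 ⟨mem_univ _, not_lt.1 him, h⟩)
      linarith [apply_lt_of_lt_firstReach hlt]

theorem eq_of_mem_sInterval_decomp (hx : x ∈ SInterval (decompBase m a c) (decompVars m a c))
    {i : Fin n} (hi : i ∉ decompVars m a c) : x i = c i := by
  rw [hx.2 i hi, decompBase_of_notMem hi]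

theorem firstReach_eq_of_mem_sInterval (hc : ∃ i, a i ≤ c i)
    (hx : x ∈ SInterval (decompBase m a c) (decompVars m a c)) :
    firstReach a x = firstReach a c :=
  firstReach_eq_of_forall_lt ((le_decompBase_firstReach hc).trans (hx.1 _)) fun i hi => by
    rw [eq_of_mem_sInterval_decomp hx (notMem_decompVars_of_lt_firstReach hi)]
    exact apply_lt_of_lt_firstReach hi

theorem decomp_rigid (hc : ∃ i, a i ≤ c i)
    (hx : x ∈ SInterval (decompBase m a c) (decompVars m a c)) :
    decompBase m a x = decompBase m a c ∧ decompVars m a x = decompVars m a c := by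
  have hj := firstReach_eq_of_mem_sInterval hc hx
  have hZ : decompVars m a x = decompVars m a c := by simp only [decompVars, hj]
  refine ⟨funext fun i => ?_, hZ⟩
  by_cases hi : i ∈ decompVars m a c
  · simp only [decompBase, hZ, hj, hi, if_true]
  · rw [decompBase_of_notMem (hZ ▸ hi), decompBase_of_notMem hi,
      eq_of_mem_sInterval_decomp hx hi]

theorem sInterval_decomp_subset (hc : c ∈ quotSet m a b) :
    SInterval (decompBase m a c) (decompVars m a c) ⊆ quotSet m a b := by
  intro x hx
  have hc' := mem_quotSet.1 hc
  refine mem_quotSet.2 ⟨⟨_, (le_decompBase_firstReach hc'.1).trans (hx.1 _)⟩, fun i hi => ?_⟩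
  rw [eq_of_mem_sInterval_decomp hx (notMem_decompVars_of_lt hi)]
  exact hc'.2 i hi

theorem one_le_card_decompVars (hmn : m < n) : 1 ≤ (decompVars m a c).card := by
  have := (firstReach a c).isLt
  refine card_pos.2 ⟨⟨n - 1, by omega⟩, mem_filter.2 ⟨mem_univ _, ?_, ?_⟩⟩
  · change m ≤ n - 1
    omega
  · change (firstReach a c : ℕ) ≤ n - 1
    omega

theorem one_le_sdepth_quotSet (hmn : m < n) (ha : ∀ i, 1 ≤ a i)
    (hab : ∀ i : Fin n, (i : ℕ) < m → a i ≤ b i) : 1 ≤ sdepth (quotSet m a b) := by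
  refine le_sdepthOn_of_retraction (decompBase m a) (decompVars m a)
    (quotSet_nonempty hmn ha hab) ?_ (fun _ _ => subset_univ _)
    (fun c hc => ⟨decompBase_le (mem_quotSet.1 hc).1, fun i hi => (decompBase_of_notMem hi).symm⟩)
    (fun c hc => sInterval_decomp_subset hc)
    (fun c hc x hx => decomp_rigid (mem_quotSet.1 hc).1 hx)
    (fun _ _ => one_le_card_decompVars hmn)
  refine (Set.finite_Icc 0 (a + b)).subset ?_
  rintro _ ⟨c, hc, rfl⟩
  exact ⟨fun _ => Nat.zero_le _, decompBase_le_add hc⟩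

end MonomialQuotient

theorem stmt_8_general {n m : ℕ} (a b : Fin n → ℕ) (ha : ∀ i, 1 ≤ a i)
    (hab : ∀ i : Fin n, (i : ℕ) < m → a i ≤ b i) :
    (if m < n then 1 else 0) ≤
      sdepth ({c : Fin n → ℕ | ∃ i, a i ≤ c i} \
        {c | ∃ i : Fin n, (i : ℕ) < m ∧ b i ≤ c i}) := by
  split_ifs with hmn
  · have : NeZero n := ⟨by omega⟩
    exact MonomialQuotient.one_le_sdepth_quotSet hmn ha hab
  · exact Nat.zero_le _

/-- the Stanley conjecture for
`(x_1^{a_1},...,x_n^{a_n})/(x_1^{b_1},...,x_m^{b_m})`: its Stanley depth is at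
least its depth, which equals `1` if `m < n` and `0` if `m = n`. -/
theorem stmt_8 {n m : ℕ} (hmn : m ≤ n) (a b : Fin n → ℕ) (ha : ∀ i, 1 ≤ a i)
    (hab : ∀ i : Fin n, (i : ℕ) < m → a i ≤ b i) :
    (if m < n then 1 else 0) ≤
      sdepth ({c : Fin n → ℕ | ∃ i, a i ≤ c i} \
        {c | ∃ i : Fin n, (i : ℕ) < m ∧ b i ≤ c i}) :=
  stmt_8_general a b ha hab
end

section
/- Let u_1,...,u_m and v_1,...,v_m be two regular sequences of monomials in S with u_i | v_i for all i, and v_j ≠ u_j for some index j. Then sdepth_S((u_1,...,u_m)/(v_1,...,v_m)) = n - m; moreover (u_1,...,u_m)/(v_1,...,v_m) admits a Stanley decomposition in which every Stanley space has dimension exactly n - m. -/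
/-! Ordering the monomials of `(u_1, …, u_m)/(v_1, …, v_m)` by the first `u_i` dividing them
splits the quotient as `⨁_i u_i · S/(((u_1, …, u_{i-1}) + (v_1, …, v_m)) : u_i)`, and each of
these colon ideals is generated by the regular sequence
`u_1, …, u_{i-1}, v_i/u_i, v_{i+1}, …, v_m`. For a regular sequence `T_1, …, T_m` the module
`S/(T_1, …, T_m)` is the tensor product of the `S/(T_j)`, and multiplying out the decompositions
`S/(x^w) = ⨁_{k, e < w_k} x_1^{w_1} ⋯ x_{k-1}^{w_{k-1}} x_k^e K[x_j : j ≠ k]` yields Stanley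
spaces of dimension exactly `n - m`.

Conversely, pick a variable `x_{k_j}` of each `v_j`, dividing `v_j/u_j` for an index with
`u_j ≠ v_j`. The monomial `lcm_j (v_j/x_{k_j})` lies in the quotient but leaves it when multiplied
by any `x_{k_j}`, so the Stanley space containing it uses none of these `m` variables. -/

open Finset

structure IsIndexedPartition {α ι : Type*} (M : Set α) (I : ι → Set α) : Prop where
  mem_iff : ∀ x, x ∈ M ↔ ∃ i, x ∈ I i
  eq_of_mem : ∀ {x i j}, x ∈ I i → x ∈ I j → i = j

namespace IsIndexedPartition

variable {α ι : Type*} {M : Set α}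

theorem subset {I : ι → Set α} (h : IsIndexedPartition M I) (i : ι) : I i ⊆ M :=
  fun x hx => (h.mem_iff x).2 ⟨i, hx⟩

theorem iInter {κ : ι → Type*} {M : ι → Set α} {I : ∀ j, κ j → Set α}
    (h : ∀ j, IsIndexedPartition (M j) (I j)) :
    IsIndexedPartition (⋂ j, M j) fun f : ∀ j, κ j => ⋂ j, I j (f j) where
  mem_iff x := by simp only [Set.mem_iInter, (h _).mem_iff, Classical.skolem]
  eq_of_mem hf hf' := funext fun j =>
    (h j).eq_of_mem (Set.mem_iInter.1 hf j) (Set.mem_iInter.1 hf' j)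

theorem sigma {κ : ι → Type*} {P : ι → Set α} {I : ∀ i, κ i → Set α}
    (hP : IsIndexedPartition M P) (h : ∀ i, IsIndexedPartition (P i) (I i)) :
    IsIndexedPartition M fun p : Σ i, κ i => I p.1 p.2 where
  mem_iff x := by simp only [hP.mem_iff, (h _).mem_iff, Sigma.exists]
  eq_of_mem {x p q} hp hq := by
    obtain ⟨i, s⟩ := p
    obtain ⟨j, t⟩ := q
    obtain rfl : i = j := hP.eq_of_mem ((h i).subset s hp) ((h j).subset t hq)
    obtain rfl := (h i).eq_of_mem hp hq
    rfl

theorem image {β : Type*} {I : ι → Set α} {g : α → β} (hg : g.Injective)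
    (h : IsIndexedPartition M I) : IsIndexedPartition (g '' M) fun i => g '' I i where
  mem_iff y := by
    by_cases hy : y ∈ Set.range g
    · obtain ⟨x, rfl⟩ := hy
      simp only [hg.mem_set_image, h.mem_iff]
    · simp [Set.mem_image, fun x => (mt (Set.mem_range.2 ⟨x, ·⟩) hy : g x ≠ y)]
  eq_of_mem := by
    rintro _ i j ⟨x, hx, rfl⟩ hy
    exact h.eq_of_mem hx (hg.mem_set_image.1 hy)

theorem of_isLeast [LinearOrder ι] [WellFoundedLT ι] {p : α → ι → Prop}
    (hp : ∀ x ∈ M, ∃ i, p x i) :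
    IsIndexedPartition M fun i => {x | x ∈ M ∧ IsLeast {j | p x j} i} where
  mem_iff x := by
    refine ⟨fun hx => ?_, fun ⟨_, hx, _⟩ => hx⟩
    obtain ⟨i, hi, hmin⟩ := wellFounded_lt.has_min {j | p x j} (hp x hx)
    exact ⟨i, hx, hi, fun j hj => not_lt.1 (hmin j hj)⟩
  eq_of_mem hi hj := hi.2.unique hj.2

end IsIndexedPartition

section Intervals

variable {n : ℕ}

theorem mem_msupp {u : Fin n → ℕ} {i : Fin n} : i ∈ msupp u ↔ u i ≠ 0 := by
  simp [msupp]

theorem apply_eq_zero_of_disjoint_msupp {w w' : Fin n → ℕ} (h : Disjoint (msupp w) (msupp w'))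
    {k : Fin n} (hk : k ∈ msupp w') : w k = 0 :=
  not_ne_iff.1 fun hw => disjoint_left.1 h (mem_msupp.2 hw) hk

theorem injective_of_forall_mem_msupp {m : ℕ} {T : Fin m → Fin n → ℕ}
    (hT : ∀ j j', j ≠ j' → Disjoint (msupp (T j)) (msupp (T j'))) {K : Fin m → Fin n}
    (hK : ∀ j, K j ∈ msupp (T j)) : K.Injective := fun j j' h =>
  not_ne_iff.1 fun hne => disjoint_left.1 (hT j j' hne) (hK j) (h ▸ hK j')

theorem le_add_iff_of_disjoint_msupp {w s c : Fin n → ℕ} (h : Disjoint (msupp w) (msupp s)) :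
    w ≤ s + c ↔ w ≤ c := by
  refine ⟨fun hle k => ?_, fun hle => hle.trans le_add_self⟩
  by_cases hw : w k = 0
  · simp [hw]
  · simpa [apply_eq_zero_of_disjoint_msupp h.symm (mem_msupp.2 hw)] using hle k

theorem Finset.sup_apply_of_forall_ne_eq_bot {ι α β : Type*} [SemilatticeSup β]
    [OrderBot β] {s : Finset ι} (b : ι → α → β) {j : ι} (hj : j ∈ s) {x : α}
    (h : ∀ j' ∈ s, j' ≠ j → b j' x = ⊥) : (s.sup b) x = b j x := by
  rw [Finset.sup_apply]
  refine le_antisymm (Finset.sup_le fun j' hj' => ?_) (le_sup (f := fun j' => b j' x) hj)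
  rcases eq_or_ne j' j with rfl | hne
  · exact le_rfl
  · simp [h j' hj' hne]

theorem sInterval_add (s a : Fin n → ℕ) (Z : Finset (Fin n)) :
    SInterval (s + a) Z = (s + ·) '' SInterval a Z := by
  ext c
  constructor
  · rintro ⟨hle, heq⟩
    have hs : s ≤ c := le_self_add.trans hle
    refine ⟨c - s, ⟨le_tsub_of_add_le_left hle, fun k hk => ?_⟩, add_tsub_cancel_of_le hs⟩
    simp only [Pi.sub_apply, heq k hk, Pi.add_apply, add_tsub_cancel_left]
  · rintro ⟨d, ⟨hle, heq⟩, rfl⟩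
    exact ⟨add_le_add_right hle s, fun k hk => by simp [heq k hk]⟩

theorem add_single_mem_sInterval {a c : Fin n → ℕ} {Z : Finset (Fin n)} {k : Fin n}
    (hc : c ∈ SInterval a Z) (hk : k ∈ Z) : c + Pi.single k 1 ∈ SInterval a Z := by
  refine ⟨hc.1.trans le_self_add, fun i hi => ?_⟩
  rw [Pi.add_apply, Pi.single_eq_of_ne (ne_of_mem_of_not_mem hk hi).symm, add_zero, hc.2 i hi]

theorem iInter_sInterval {ι : Type*} [Fintype ι] (a : ι → Fin n → ℕ)
    (Z : ι → Finset (Fin n)) (h : ∀ j, ∀ k ∉ Z j, (univ.sup a) k = a j k) :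
    ⋂ j, SInterval (a j) (Z j) = SInterval (univ.sup a) (univ.inf Z) := by
  ext c
  simp only [SInterval, Set.mem_iInter, Set.mem_ofPred_eq, Finset.sup_le_iff, mem_univ,
    true_implies, Finset.mem_inf, not_forall]
  constructor
  · intro hc
    exact ⟨fun j => (hc j).1, fun k ⟨j, hk⟩ => ((hc j).2 k hk).trans (h j k hk).symm⟩
  · rintro ⟨hle, heq⟩ j
    exact ⟨hle j, fun k hk => (heq k ⟨j, hk⟩).trans (h j k hk)⟩

end Intervals

section Complement

variable {n m : ℕ}

/-- `x_1^{w_1} ⋯ x_{k-1}^{w_{k-1}} x_k^e`, for `e < w_k` the generator of a Stanley space of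
`S/(x^w)`. -/
def corner (w : Fin n → ℕ) (k : Fin n) (e : ℕ) : Fin n → ℕ :=
  fun k' => if k' < k then w k' else if k' = k then e else 0

theorem msupp_corner_subset {w : Fin n → ℕ} {k : Fin n} {e : ℕ} (he : e < w k) :
    msupp (corner w k e) ⊆ msupp w := by
  intro k' hk'
  rw [mem_msupp] at hk' ⊢
  unfold corner at hk'
  split_ifs at hk' with hlt heq
  · exact hk'
  · subst heq; omega
  · exact absurd rfl hk'

theorem mem_sInterval_corner_iff {w c : Fin n → ℕ} {k : Fin n} {e : ℕ} :
    c ∈ SInterval (corner w k e) (univ.erase k) ↔ (∀ k' < k, w k' ≤ c k') ∧ c k = e := by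
  simp only [SInterval, Set.mem_ofPred_eq, mem_erase, mem_univ, and_true, not_not,
    forall_eq, corner, lt_irrefl, if_false, if_true]
  refine ⟨fun ⟨hle, hk⟩ => ⟨fun k' hk' => by simpa [corner, hk'] using hle k', hk⟩,
    fun ⟨hlt, hk⟩ => ⟨fun k' => ?_, hk⟩⟩
  simp only [corner]
  split_ifs with h₁ h₂
  · exact hlt k' h₁
  · exact h₂ ▸ hk.ge
  · exact Nat.zero_le _

theorem isIndexedPartition_corner (w : Fin n → ℕ) :
    IsIndexedPartition {c | ¬ w ≤ c}
      fun p : Σ k, Fin (w k) => SInterval (corner w p.1 p.2) (univ.erase p.1) where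
  mem_iff c := by
    simp only [Sigma.exists, mem_sInterval_corner_iff]
    refine ⟨fun hc => ?_, fun ⟨k, e, _, hk⟩ hle => (hle k).not_gt (hk ▸ e.isLt)⟩
    obtain ⟨k, hk, hmin⟩ := wellFounded_lt.has_min {k | c k < w k} 
      (by simpa [Pi.le_def] using hc : ∃ k, c k < w k)
    exact ⟨k, ⟨c k, hk⟩, fun k' hk' => not_lt.1 fun h => hmin k' h hk', rfl⟩
  eq_of_mem := by
    rintro c ⟨k, e⟩ ⟨k', e'⟩ h h'
    rw [mem_sInterval_corner_iff] at h h'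
    obtain rfl : k = k' := by
      by_contra hne
      rcases lt_or_gt_of_ne hne with hlt | hlt
      · exact (h'.1 k hlt).not_gt (h.2 ▸ e.isLt)
      · exact (h.1 k' hlt).not_gt (h'.2 ▸ e'.isLt)
    obtain rfl : e = e' := Fin.ext (h.2.symm.trans h'.2)
    rfl

def cornerSup (T : Fin m → Fin n → ℕ) (f : ∀ j, Σ k, Fin (T j k)) : Fin n → ℕ :=
  univ.sup fun j => corner (T j) (f j).1 (f j).2

def cornerVars (T : Fin m → Fin n → ℕ) (f : ∀ j, Σ k, Fin (T j k)) : Finset (Fin n) :=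
  univ.inf fun j => univ.erase (f j).1

theorem fst_mem_msupp {T : Fin m → Fin n → ℕ} (f : ∀ j, Σ k, Fin (T j k)) (j : Fin m) :
    (f j).1 ∈ msupp (T j) :=
  mem_msupp.2 (f j).2.pos.ne'

variable {T : Fin m → Fin n → ℕ}
  (hT : ∀ j j', j ≠ j' → Disjoint (msupp (T j)) (msupp (T j')))
include hT

theorem card_cornerVars (f : ∀ j, Σ k, Fin (T j k)) : (cornerVars T f).card = n - m := by
  have : cornerVars T f = univ \ univ.image fun j => (f j).1 := by
    ext k
    simp [cornerVars, Finset.mem_inf, eq_comm]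
  rw [this, card_sdiff_of_subset (subset_univ _),
    card_image_of_injective _ (injective_of_forall_mem_msupp hT (fst_mem_msupp f)),
    card_univ, card_univ, Fintype.card_fin, Fintype.card_fin]

theorem isIndexedPartition_compl_of_disjoint :
    IsIndexedPartition {c | ∀ j, ¬ T j ≤ c}
      fun f => SInterval (cornerSup T f) (cornerVars T f) := by
  convert IsIndexedPartition.iInter fun j => isIndexedPartition_corner (T j) using 1
  · ext c
    simp
  · funext f
    refine (iInter_sInterval _ _ fun j k hk => ?_).symm
    obtain rfl : k = (f j).1 := by simpa using hk
    refine Finset.sup_apply_of_forall_ne_eq_bot _ (mem_univ _) fun j' _ hj' => ?_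
    exact apply_eq_zero_of_disjoint_msupp
      ((hT j' j hj').mono_left (msupp_corner_subset (f j').2.isLt)) (fst_mem_msupp f j)

end Complement

section Quotient

variable {n m : ℕ} {u v : Fin m → Fin n → ℕ}

theorem mem_upSet_range {c : Fin n → ℕ} : c ∈ upSet (Set.range u) ↔ ∃ j, u j ≤ c := by
  simp [upSet]

theorem msupp_subset_of_le {w w' : Fin n → ℕ} (h : w ≤ w') : msupp w ⊆ msupp w' :=
  fun k hk => mem_msupp.2 fun h0 => mem_msupp.1 hk (Nat.le_zero.1 (h0 ▸ h k))

/-- Generators of `((u_1, …, u_{i-1}) + (v_1, …, v_m)) : u_i`. -/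
def colonGens (u v : Fin m → Fin n → ℕ) (i j : Fin m) : Fin n → ℕ :=
  if j < i then u j else if j = i then v i - u i else v j

variable (hdvd : ∀ i, u i ≤ v i)
include hdvd

theorem msupp_colonGens_subset (i j : Fin m) : msupp (colonGens u v i j) ⊆ msupp (v j) := by
  unfold colonGens
  split_ifs with hlt heq
  · exact msupp_subset_of_le (hdvd j)
  · exact heq ▸ msupp_subset_of_le tsub_le_self
  · exact subset_rfl

variable (hv : ∀ j k, j ≠ k → Disjoint (msupp (v j)) (msupp (v k)))
include hv

theorem colonGens_disjoint (i : Fin m) :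
    ∀ j j', j ≠ j' → Disjoint (msupp (colonGens u v i j)) (msupp (colonGens u v i j')) :=
  fun j j' hjj' => (hv j j' hjj').mono (msupp_colonGens_subset hdvd i j)
    (msupp_colonGens_subset hdvd i j')

variable (hu : ∀ j k, j ≠ k → Disjoint (msupp (u j)) (msupp (u k)))
include hu

theorem image_add_compl_colonGens (i : Fin m) :
    (u i + ·) '' {d | ∀ j, ¬ colonGens u v i j ≤ d} =
      {c | c ∈ upSet (Set.range u) \ upSet (Set.range v) ∧ IsLeast {j | u j ≤ c} i} := by
  ext c
  simp only [Set.mem_image, Set.mem_ofPred_eq, Set.mem_sdiff, mem_upSet_range, not_exists]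
  constructor
  · rintro ⟨d, hd, rfl⟩
    have hu_not_le : ∀ j < i, ¬ u j ≤ u i + d := fun j hj hle => by
      refine hd j ?_
      rw [colonGens, if_pos hj]
      exact (le_add_iff_of_disjoint_msupp (hu j i hj.ne)).1 hle
    refine ⟨⟨⟨i, le_self_add⟩, fun j hle => ?_⟩, show u i ≤ u i + d from le_self_add,
      fun j hj => not_lt.1 fun hlt => hu_not_le j hlt hj⟩
    rcases lt_trichotomy j i with hlt | rfl | hgt
    · exact hu_not_le j hlt ((hdvd j).trans hle)
    · refine hd j ?_
      rw [colonGens, if_neg (lt_irrefl j), if_pos rfl]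
      exact tsub_le_iff_left.2 hle
    · refine hd j ?_
      rw [colonGens, if_neg (not_lt.2 hgt.le), if_neg hgt.ne']
      exact (le_add_iff_of_disjoint_msupp ((hv j i hgt.ne').mono_right
        (msupp_subset_of_le (hdvd i)))).1 hle
  · rintro ⟨⟨-, hv_not_le⟩, hi, hmin⟩
    refine ⟨c - u i, fun j hle => ?_, add_tsub_cancel_of_le hi⟩
    unfold colonGens at hle
    split_ifs at hle with hlt heq
    · exact (hmin (hle.trans tsub_le_self)).not_gt hlt
    · exact hv_not_le i ((tsub_le_tsub_iff_right hi).1 hle)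
    · exact hv_not_le j (hle.trans tsub_le_self)

theorem isIndexedPartition_quotient :
    IsIndexedPartition (upSet (Set.range u) \ upSet (Set.range v))
      fun p : Σ i, ∀ j, Σ k, Fin (colonGens u v i j k) =>
          SInterval (u p.1 + cornerSup (colonGens u v p.1) p.2)
          (cornerVars (colonGens u v p.1) p.2) := by
  refine (IsIndexedPartition.of_isLeast fun c hc => mem_upSet_range.1 hc.1).sigma
    (I := fun i f => SInterval (u i + cornerSup (colonGens u v i) f) (cornerVars _ f)) fun i => ?_
  rw [← image_add_compl_colonGens hdvd hv hu i]
  simp only [sInterval_add]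
  exact (isIndexedPartition_compl_of_disjoint (colonGens_disjoint hdvd hv i)).image
    (add_right_injective _)

end Quotient

section StanleyDepth

variable {n : ℕ} {M : Set (Fin n → ℕ)}

theorem IsIndexedPartition.exists_isStanleyDecompOn {ι : Type*} [Fintype ι]
    {a : ι → Fin n → ℕ} {Z : ι → Finset (Fin n)}
    (h : IsIndexedPartition M fun i => SInterval (a i) (Z i)) (hM : M.Nonempty) {d : ℕ}
    (hZ : ∀ i, (Z i).card = d) :
    ∃ r, 0 < r ∧ ∃ (a' : Fin r → Fin n → ℕ) (Z' : Fin r → Finset (Fin n)),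
      IsStanleyDecompOn univ M a' Z' ∧ ∀ t, (Z' t).card = d := by
  obtain ⟨x, hx⟩ := hM
  obtain ⟨i, -⟩ := (h.mem_iff x).1 hx
  have : Nonempty ι := ⟨i⟩
  let e := (Fintype.equivFin ι).symm
  refine ⟨Fintype.card ι, Fintype.card_pos, a ∘ e, Z ∘ e,
    ⟨fun _ => subset_univ _, fun t => h.subset (e t), fun x hx => ?_, fun t t' htt' => ?_⟩,
    fun t => hZ (e t)⟩
  · obtain ⟨i, hi⟩ := (h.mem_iff x).1 hx
    exact ⟨e.symm i, by simpa using hi⟩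
  · exact Set.disjoint_left.2 fun x hx hx' => htt' (e.injective (h.eq_of_mem hx hx'))

theorem le_sdepth_of_isStanleyDecompOn {r : ℕ} (hr : 0 < r) {a : Fin r → Fin n → ℕ}
    {Z : Fin r → Finset (Fin n)} (h : IsStanleyDecompOn univ M a Z) {d : ℕ}
    (hd : ∀ i, d ≤ (Z i).card) : d ≤ sdepth M := by
  refine le_csSup ⟨n, ?_⟩ ⟨r, hr, a, Z, h, hd⟩
  rintro d ⟨r, hr, a, Z, -, hd⟩
  simpa using (hd ⟨0, hr⟩).trans (card_le_univ _)

/-- A monomial of `M` that leaves `M` when multiplied by any `x_k`, `k ∈ W`, lies in a Stanley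
space none of whose variables belongs to `W`. -/
theorem sdepth_le_of_add_single_notMem {c : Fin n → ℕ} (hc : c ∈ M) (W : Finset (Fin n))
    (hW : ∀ k ∈ W, c + Pi.single k 1 ∉ M) : sdepth M ≤ n - W.card := by
  refine csSup_le' ?_
  rintro d ⟨r, -, a, Z, ⟨-, hsub, hcov, -⟩, hd⟩
  obtain ⟨i, hi⟩ := hcov c hc
  have hWZ : Disjoint W (Z i) :=
    disjoint_left.2 fun k hkW hkZ => hW k hkW (hsub i (add_single_mem_sInterval hi hkZ))
  have := (card_union_of_disjoint hWZ).symm.trans_le (card_le_univ _)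
  rw [Fintype.card_fin] at this
  have := hd i
  omega

end StanleyDepth

theorem exists_mem_quotient_forall_add_single_mem {n m : ℕ} {u v : Fin m → Fin n → ℕ}
    (hv : IsRegSeqM v) (hdvd : ∀ i, u i ≤ v i) (hne : ∃ j, v j ≠ u j) :
    ∃ c ∈ upSet (Set.range u) \ upSet (Set.range v), ∃ W : Finset (Fin n),
      W.card = m ∧ ∀ k ∈ W, c + Pi.single k 1 ∈ upSet (Set.range v) := by
  obtain ⟨j₀, hj₀⟩ := hne
  obtain ⟨k₀, hk₀⟩ : ∃ k, u j₀ k < v j₀ k := by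
    by_contra! h
    exact hj₀ (le_antisymm h (hdvd j₀))
  have hK : ∀ j, ∃ k, k ∈ msupp (v j) ∧ (j = j₀ → u j k < v j k) := by
    intro j
    by_cases hj : j = j₀
    · subst hj
      exact ⟨k₀, mem_msupp.2 (by omega), fun _ => hk₀⟩
    · obtain ⟨k, hk⟩ := Function.ne_iff.1 (hv.1 j)
      exact ⟨k, mem_msupp.2 hk, fun h => absurd h hj⟩
  choose K hK_mem hKu using hK
  -- `c` is the lcm of the `v_j / x_{K j}`
  set c := univ.sup fun j => v j - Pi.single (K j) 1
  have hc_le : ∀ j, v j - Pi.single (K j) 1 ≤ c := fun j =>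
    le_sup (f := fun j => v j - Pi.single (K j) 1) (mem_univ j)
  have hc_K : ∀ j, c (K j) = v j (K j) - 1 := fun j => by
    have : ∀ j' ∈ univ, j' ≠ j → (v j' - Pi.single (K j') 1 : Fin n → ℕ) (K j) = 0 :=
      fun j' _ hj' => by simp [apply_eq_zero_of_disjoint_msupp (hv.2 j' j hj') (hK_mem j)]
    simp [c, Finset.sup_apply_of_forall_ne_eq_bot _ (mem_univ _) this]
  refine ⟨c, ⟨mem_upSet_range.2 ⟨j₀, le_trans (fun k => ?_) (hc_le j₀)⟩,
    fun hcv => ?_⟩, univ.image K, ?_, ?_⟩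
  · rcases eq_or_ne k (K j₀) with rfl | hk
    · have := hKu j₀ rfl
      simp only [Pi.sub_apply, Pi.single_eq_same]
      omega
    · simpa [Pi.single_eq_of_ne hk] using hdvd j₀ k
  · obtain ⟨j, hj⟩ := mem_upSet_range.1 hcv
    have hpos : 0 < v j (K j) := Nat.pos_of_ne_zero (mem_msupp.1 (hK_mem j))
    exact (hj (K j)).not_gt (hc_K j ▸ Nat.sub_lt hpos one_pos)
  · rw [card_image_of_injective _ (injective_of_forall_mem_msupp hv.2 hK_mem), card_univ,
      Fintype.card_fin]
  · simp only [mem_image, mem_univ, true_and, forall_exists_index, forall_apply_eq_imp_iff]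
    exact fun j => mem_upSet_range.2 ⟨j, le_tsub_add.trans (add_le_add (hc_le j) le_rfl)⟩

theorem stmt_12_general {n m : ℕ} (u v : Fin m → Fin n → ℕ)
    (hu : IsRegSeqM u) (hv : IsRegSeqM v) (hdvd : ∀ i, u i ≤ v i)
    (hne : ∃ j, v j ≠ u j) :
    sdepth (upSet (Set.range u) \ upSet (Set.range v)) = n - m ∧
      ∃ (r : ℕ), 0 < r ∧ ∃ (a : Fin r → Fin n → ℕ) (Z : Fin r → Finset (Fin n)),
        IsStanleyDecompOn Finset.univ
          (upSet (Set.range u) \ upSet (Set.range v)) a Z ∧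
        ∀ i, (Z i).card = n - m := by
  obtain ⟨c, hc, W, hW_card, hW⟩ := exists_mem_quotient_forall_add_single_mem hv hdvd hne
  obtain ⟨r, hr, a, Z, hdec, hZ⟩ :=
    (isIndexedPartition_quotient hdvd hv.2 hu.2).exists_isStanleyDecompOn ⟨c, hc⟩
      fun p => card_cornerVars (colonGens_disjoint hdvd hv.2 p.1) p.2
  have hle : sdepth (upSet (Set.range u) \ upSet (Set.range v)) ≤ n - m :=
    hW_card ▸ sdepth_le_of_add_single_notMem hc W fun k hk hk' => hk'.2 (hW k hk)
  exact ⟨hle.antisymm (le_sdepth_of_isStanleyDecompOn hr hdec fun i => (hZ i).ge),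
    r, hr, a, Z, hdec, hZ⟩

/-- for regular sequences of monomials `u_1,...,u_m` and
`v_1,...,v_m` with `u_i ∣ v_i` and `u_j ≠ v_j` for some `j`,
`sdepth_S((u_1,...,u_m)/(v_1,...,v_m)) = n - m`; moreover there is a Stanley
decomposition all of whose Stanley spaces have dimension `n - m`. -/
theorem stmt_12 {n m : ℕ} (hm : 1 ≤ m) (u v : Fin m → Fin n → ℕ)
    (hu : IsRegSeqM u) (hv : IsRegSeqM v) (hdvd : ∀ i, u i ≤ v i)
    (hne : ∃ j, v j ≠ u j) :
    sdepth (upSet (Set.range u) \ upSet (Set.range v)) = n - m ∧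
      ∃ (r : ℕ), 0 < r ∧ ∃ (a : Fin r → Fin n → ℕ) (Z : Fin r → Finset (Fin n)),
        IsStanleyDecompOn Finset.univ
          (upSet (Set.range u) \ upSet (Set.range v)) a Z ∧
        ∀ i, (Z i).card = n - m :=
  stmt_12_general u v hu hv hdvd hne
end

section
/- Let I ⊊ J ⊆ S be monomial complete intersection ideals, with J generated by a regular sequence of q monomials and I by a regular sequence of p monomials. Then n - p ≥ sdepth_S(J/I) ≥ n - p - ⌊(q-p)/2⌋. -/
set_option linter.unusedSectionVars false
set_option linter.unusedVariables false
set_option maxHeartbeats 1000000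

namespace Stmt14

variable {ι : Type} [DecidableEq ι]

def Reg (R : Finset ι) (g : Finset ι → Bool) (b : Bool) (T : Finset ι) : Prop :=
  T = ∅ ∨ (T ⊆ R ∧ T.Nonempty ∧ g T = b)

section Helpers
variable {R S T : Finset ι} {g : Finset ι → Bool} {b : Bool} {w : ι}

lemma Reg.subs (h : Reg R g b S) : S ⊆ R := by
  rcases h with rfl | ⟨h, _, _⟩
  · exact Finset.empty_subset _
  · exact h

lemma reg_true_of_not (hS : S ⊆ R) (h : ¬(S.Nonempty ∧ g S = false)) : Reg R g true S := by
  by_cases hne : S.Nonempty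
  · right
    refine ⟨hS, hne, ?_⟩
    cases hgt : g S
    · exact absurd ⟨hne, hgt⟩ h
    · rfl
  · left; exact Finset.not_nonempty_iff_eq_empty.1 hne

lemma reg_false_of_not (hS : S ⊆ R) (h : ¬(S.Nonempty ∧ g S = true)) : Reg R g false S := by
  by_cases hne : S.Nonempty
  · right
    refine ⟨hS, hne, ?_⟩
    cases hgt : g S
    · rfl
    · exact absurd ⟨hne, hgt⟩ h
  · left; exact Finset.not_nonempty_iff_eq_empty.1 hne

lemma not_nf_of_reg_true (h : Reg R g true S) : ¬(S.Nonempty ∧ g S = false) := by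
  rcases h with rfl | ⟨_, _, hg⟩
  · rintro ⟨hne, _⟩; simp at hne
  · rintro ⟨_, hgf⟩; rw [hg] at hgf; cases hgf

lemma not_nt_of_reg_false (h : Reg R g false S) : ¬(S.Nonempty ∧ g S = true) := by
  rcases h with rfl | ⟨_, _, hg⟩
  · rintro ⟨hne, _⟩; simp at hne
  · rintro ⟨_, hgf⟩; rw [hg] at hgf; cases hgf

lemma subset_of_insert_not_mem (hT : T ⊆ insert w R) (hw : w ∉ T) : T ⊆ R := by
  intro x hx
  rcases Finset.mem_insert.1 (hT hx) with rfl | hx'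
  · exact absurd hx hw
  · exact hx'

lemma mem_top_of_mem {x : ι} (hx : x ∈ T) (hsub : T.erase w ⊆ S) : x ∈ insert w S := by
  rcases eq_or_ne x w with rfl | hne
  · exact Finset.mem_insert_self _ _
  · exact Finset.mem_insert_of_mem (hsub (Finset.mem_erase.2 ⟨hne, hx⟩))

end Helpers

structure BHS (R E₁ E₂ : Finset ι) (t₁ t₂ s₁ s₂ : ℕ)
    (W : Finset ι → Finset ι × Finset ι) (g : Finset ι → Bool)
    (P₁ P₂ : Finset ι → Finset ι × Finset ι) : Prop where
  hE₁ : E₁ ⊆ R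
  hE₂ : E₂ ⊆ R
  w1 : ∀ T, T ⊆ R → T.Nonempty → (W T).1 ⊆ T
  w2 : ∀ T, T ⊆ R → T.Nonempty → T ⊆ (W T).2
  w3 : ∀ T, T ⊆ R → T.Nonempty → (W T).2 ⊆ R
  w4 : ∀ T, T ⊆ R → T.Nonempty → (W T).1.Nonempty
  w5 : ∀ T, T ⊆ R → T.Nonempty → ∀ T', (W T).1 ⊆ T' → T' ⊆ (W T).2 →
        W T' = W T ∧ g T' = g T
  w6t : ∀ T, T ⊆ R → T.Nonempty → g T = true → t₁ ≤ (W T).2.card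
  w6f : ∀ T, T ⊆ R → T.Nonempty → g T = false → t₂ ≤ (W T).2.card
  n1 : ∀ T, Reg R g true T → (P₁ T).1 ⊆ T ∧ T ⊆ (P₁ T).2 ∧ (P₁ T).2 ⊆ R
  n2e : ∀ T, Reg R g true T → (P₁ T).1 = ∅ → P₁ T = (∅, E₁)
  n2n : ∀ T, Reg R g true T → (P₁ T).1.Nonempty → s₁ ≤ (P₁ T).2.card
  n3 : ∀ T, Reg R g true T → ∀ T', (P₁ T).1 ⊆ T' → T' ⊆ (P₁ T).2 →
        Reg R g true T' ∧ P₁ T' = P₁ T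
  d1 : ∀ T, Reg R g false T → (P₂ T).1 ⊆ T ∧ T ⊆ (P₂ T).2 ∧ (P₂ T).2 ⊆ R
  d2e : ∀ T, Reg R g false T → (P₂ T).1 = ∅ → P₂ T = (∅, E₂)
  d2n : ∀ T, Reg R g false T → (P₂ T).1.Nonempty → s₂ ≤ (P₂ T).2.card
  d3 : ∀ T, Reg R g false T → ∀ T', (P₂ T).1 ⊆ T' → T' ⊆ (P₂ T).2 →
        Reg R g false T' ∧ P₂ T' = P₂ T

lemma reg_not_true {R : Finset ι} {g : Finset ι → Bool} {T : Finset ι} :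
    Reg R (fun T => !(g T)) true T ↔ Reg R g false T := by
  simp [Reg]

lemma reg_not_false {R : Finset ι} {g : Finset ι → Bool} {T : Finset ι} :
    Reg R (fun T => !(g T)) false T ↔ Reg R g true T := by
  simp [Reg]

lemma BHS.swap {R E₁ E₂ : Finset ι} {t₁ t₂ s₁ s₂ : ℕ}
    {W : Finset ι → Finset ι × Finset ι} {g : Finset ι → Bool}
    {P₁ P₂ : Finset ι → Finset ι × Finset ι}
    (h : BHS R E₁ E₂ t₁ t₂ s₁ s₂ W g P₁ P₂) :
    BHS R E₂ E₁ t₂ t₁ s₂ s₁ W (fun T => !(g T)) P₂ P₁ := by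
  refine ⟨h.hE₂, h.hE₁, h.w1, h.w2, h.w3, h.w4, ?_, ?_, ?_, ?_, ?_, ?_, ?_, ?_, ?_, ?_, ?_⟩
  · intro T hT hne T' h1 h2
    obtain ⟨e1, e2⟩ := h.w5 T hT hne T' h1 h2
    exact ⟨e1, by rw [e2]⟩
  · intro T hT hne hg
    exact h.w6f T hT hne (by simpa using hg)
  · intro T hT hne hg
    exact h.w6t T hT hne (by simpa using hg)
  · intro T hT; exact h.d1 T (reg_not_true.1 hT)
  · intro T hT; exact h.d2e T (reg_not_true.1 hT)
  · intro T hT; exact h.d2n T (reg_not_true.1 hT)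
  · intro T hT T' h1 h2
    obtain ⟨r, e⟩ := h.d3 T (reg_not_true.1 hT) T' h1 h2
    exact ⟨reg_not_true.2 r, e⟩
  · intro T hT; exact h.n1 T (reg_not_false.1 hT)
  · intro T hT; exact h.n2e T (reg_not_false.1 hT)
  · intro T hT; exact h.n2n T (reg_not_false.1 hT)
  · intro T hT T' h1 h2
    obtain ⟨r, e⟩ := h.n3 T (reg_not_false.1 hT) T' h1 h2
    exact ⟨reg_not_false.2 r, e⟩

def growW (w : ι) (W P₁ : Finset ι → Finset ι × Finset ι) (g : Finset ι → Bool)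
    (T : Finset ι) : Finset ι × Finset ι :=
  if w ∈ T then
    (if (T.erase w).Nonempty ∧ g (T.erase w) = false then
      ((W (T.erase w)).1, insert w (W (T.erase w)).2)
     else (insert w (P₁ (T.erase w)).1, insert w (P₁ (T.erase w)).2))
  else (if g T = true then W T else ((W T).1, insert w (W T).2))

def growg (w : ι) (g : Finset ι → Bool) (T : Finset ι) : Bool :=
  if w ∈ T then false else g T

def growP₂ (w : ι) (W P₂ : Finset ι → Finset ι × Finset ι) (g : Finset ι → Bool)
    (T : Finset ι) : Finset ι × Finset ι :=
  if (T.erase w).Nonempty ∧ g (T.erase w) = true then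
    (insert w (W (T.erase w)).1, insert w (W (T.erase w)).2)
  else ((P₂ (T.erase w)).1, insert w (P₂ (T.erase w)).2)

section Grow

variable {R E₁ E₂ : Finset ι} {t₁ t₂ s₁ s₂ : ℕ}
  {W : Finset ι → Finset ι × Finset ι} {g : Finset ι → Bool}
  {P₁ P₂ : Finset ι → Finset ι × Finset ι} {w : ι}

lemma growW_nt {T : Finset ι} (hw : w ∉ T) (hg : g T = true) :
    growW w W P₁ g T = W T := by
  simp [growW, hw, hg]

lemma growW_nf {T : Finset ι} (hw : w ∉ T) (hg : g T = false) :
    growW w W P₁ g T = ((W T).1, insert w (W T).2) := by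
  simp [growW, hw, hg]

lemma growW_mf {T : Finset ι} (hw : w ∈ T) (h1 : (T.erase w).Nonempty)
    (h2 : g (T.erase w) = false) :
    growW w W P₁ g T = ((W (T.erase w)).1, insert w (W (T.erase w)).2) := by
  simp [growW, hw, h1, h2]

lemma growW_mn {T : Finset ι} (hw : w ∈ T)
    (h2 : ¬((T.erase w).Nonempty ∧ g (T.erase w) = false)) :
    growW w W P₁ g T = (insert w (P₁ (T.erase w)).1, insert w (P₁ (T.erase w)).2) := by
  simp only [growW, if_pos hw, if_neg h2]

lemma growg_mem {T : Finset ι} (hw : w ∈ T) : growg w g T = false := by simp [growg, hw]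

lemma growg_notmem {T : Finset ι} (hw : w ∉ T) : growg w g T = g T := by simp [growg, hw]

lemma growP₂_t {T : Finset ι} (h1 : (T.erase w).Nonempty) (h2 : g (T.erase w) = true) :
    growP₂ w W P₂ g T = (insert w (W (T.erase w)).1, insert w (W (T.erase w)).2) := by
  simp [growP₂, h1, h2]

lemma growP₂_f {T : Finset ι} (h2 : ¬((T.erase w).Nonempty ∧ g (T.erase w) = true)) :
    growP₂ w W P₂ g T = ((P₂ (T.erase w)).1, insert w (P₂ (T.erase w)).2) := by
  simp only [growP₂, if_neg h2]

/-- interval membership helper for the `false`-side extended intervals. -/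
lemma grow_aux_f (h : BHS R E₁ E₂ t₁ t₂ s₁ s₂ W g P₁ P₂) (hw : w ∉ R)
    (S : Finset ι) (hS : S ⊆ R) (hSne : S.Nonempty) (hgS : g S = false)
    (T' : Finset ι) (h1 : (W S).1 ⊆ T') (h2 : T' ⊆ insert w (W S).2) :
    growW w W P₁ g T' = ((W S).1, insert w (W S).2) ∧ growg w g T' = false := by
  have hA := h.w1 S hS hSne
  have hB := h.w3 S hS hSne
  have hwA : w ∉ (W S).1 := fun hc => hw (hS (hA hc))
  have hT'eB : T'.erase w ⊆ (W S).2 := Finset.subset_insert_iff.1 h2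
  have hAT'e : (W S).1 ⊆ T'.erase w := Finset.subset_erase.2 ⟨h1, hwA⟩
  have hsub := h.w5 S hS hSne (T'.erase w) hAT'e hT'eB
  by_cases hwT' : w ∈ T'
  · refine ⟨?_, growg_mem hwT'⟩
    rw [growW_mf hwT' ((h.w4 S hS hSne).mono hAT'e) (hsub.2.trans hgS), hsub.1]
  · have heq : T'.erase w = T' := Finset.erase_eq_of_notMem hwT'
    rw [heq] at hsub
    refine ⟨?_, ?_⟩
    · rw [growW_nf hwT' (hsub.2.trans hgS), hsub.1]
    · rw [growg_notmem hwT', hsub.2, hgS]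

/-- interval membership helper for the new `P₁ ⊗ w` intervals. -/
lemma grow_aux_n (h : BHS R E₁ E₂ t₁ t₂ s₁ s₂ W g P₁ P₂) (hw : w ∉ R)
    (S : Finset ι) (hS : Reg R g true S)
    (T' : Finset ι) (h1 : insert w (P₁ S).1 ⊆ T') (h2 : T' ⊆ insert w (P₁ S).2) :
    growW w W P₁ g T' = (insert w (P₁ S).1, insert w (P₁ S).2) ∧ growg w g T' = false := by
  obtain ⟨hn1, hn2, hn3⟩ := h.n1 S hS
  have hAR : (P₁ S).1 ⊆ R := hn1.trans hS.subs
  have hwA : w ∉ (P₁ S).1 := fun hc => hw (hAR hc)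
  have hwB : w ∉ (P₁ S).2 := fun hc => hw (hn3 hc)
  have hwT' : w ∈ T' := h1 (Finset.mem_insert_self _ _)
  have hAT'e : (P₁ S).1 ⊆ T'.erase w := by
    refine Finset.subset_erase.2 ⟨(Finset.subset_insert _ _).trans h1 |>.trans ?_, hwA⟩
    · exact fun x hx => hx
  have hT'eB : T'.erase w ⊆ (P₁ S).2 := by
    intro x hx
    obtain ⟨hxw, hxT'⟩ := Finset.mem_erase.1 hx
    rcases Finset.mem_insert.1 (h2 hxT') with rfl | hx'
    · exact absurd rfl hxw
    · exact hx'
  obtain ⟨hreg', he⟩ := h.n3 S hS (T'.erase w) hAT'e hT'eB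
  refine ⟨?_, growg_mem hwT'⟩
  rw [growW_mn hwT' (not_nf_of_reg_true hreg'), he]

lemma BHS.grow (h : BHS R E₁ E₂ t₁ t₂ s₁ s₂ W g P₁ P₂) (hw : w ∉ R)
    {t₂' s₂' : ℕ} (ht1 : t₂' ≤ E₁.card + 1) (ht2 : t₂' ≤ t₂ + 1) (ht3 : t₂' ≤ s₁ + 1)
    (hs1 : s₂' ≤ s₂ + 1) (hs2 : s₂' ≤ t₁ + 1) :
    BHS (insert w R) E₁ (insert w E₂) t₁ t₂' s₁ s₂'
      (growW w W P₁ g) (growg w g) P₁ (growP₂ w W P₂ g) := by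
  -- region translations
  have regN : ∀ T, Reg (insert w R) (growg w g) true T → Reg R g true T := by
    rintro T (rfl | ⟨hT, hne, hg⟩)
    · exact Or.inl rfl
    · by_cases hwT : w ∈ T
      · rw [growg_mem hwT] at hg; cases hg
      · rw [growg_notmem hwT] at hg
        exact Or.inr ⟨subset_of_insert_not_mem hT hwT, hne, hg⟩
  have regN' : ∀ T, Reg R g true T → Reg (insert w R) (growg w g) true T := by
    rintro T (rfl | ⟨hT, hne, hg⟩)
    · exact Or.inl rfl
    · have hwT : w ∉ T := fun hc => hw (hT hc)
      exact Or.inr ⟨hT.trans (Finset.subset_insert _ _), hne, by rw [growg_notmem hwT]; exact hg⟩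
  constructor
  -- hE₁
  · exact h.hE₁.trans (Finset.subset_insert _ _)
  -- hE₂
  · exact Finset.insert_subset_insert _ h.hE₂
  -- w1
  · intro T hT hne
    by_cases hwT : w ∈ T
    · by_cases hc : (T.erase w).Nonempty ∧ g (T.erase w) = false
      · rw [growW_mf hwT hc.1 hc.2]
        exact (h.w1 _ (Finset.subset_insert_iff.1 hT) hc.1).trans (Finset.erase_subset _ _)
      · rw [growW_mn hwT hc]
        have reg := reg_true_of_not (Finset.subset_insert_iff.1 hT) hc
        exact Finset.insert_subset hwT (((h.n1 _ reg).1).trans (Finset.erase_subset _ _))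
    · have hTR := subset_of_insert_not_mem hT hwT
      by_cases hg : g T = true
      · rw [growW_nt hwT hg]; exact h.w1 T hTR hne
      · rw [growW_nf hwT (Bool.not_eq_true _ ▸ hg : g T = false)]
        exact h.w1 T hTR hne
  -- w2
  · intro T hT hne
    by_cases hwT : w ∈ T
    · by_cases hc : (T.erase w).Nonempty ∧ g (T.erase w) = false
      · rw [growW_mf hwT hc.1 hc.2]
        exact fun x hx => mem_top_of_mem hx (h.w2 _ (Finset.subset_insert_iff.1 hT) hc.1)
      · rw [growW_mn hwT hc]
        have reg := reg_true_of_not (Finset.subset_insert_iff.1 hT) hc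
        exact fun x hx => mem_top_of_mem hx (h.n1 _ reg).2.1
    · have hTR := subset_of_insert_not_mem hT hwT
      by_cases hg : g T = true
      · rw [growW_nt hwT hg]; exact h.w2 T hTR hne
      · rw [growW_nf hwT (Bool.not_eq_true _ ▸ hg : g T = false)]
        exact (h.w2 T hTR hne).trans (Finset.subset_insert _ _)
  -- w3
  · intro T hT hne
    by_cases hwT : w ∈ T
    · by_cases hc : (T.erase w).Nonempty ∧ g (T.erase w) = false
      · rw [growW_mf hwT hc.1 hc.2]
        exact Finset.insert_subset_insert _ (h.w3 _ (Finset.subset_insert_iff.1 hT) hc.1)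
      · rw [growW_mn hwT hc]
        have reg := reg_true_of_not (Finset.subset_insert_iff.1 hT) hc
        exact Finset.insert_subset_insert _ (h.n1 _ reg).2.2
    · have hTR := subset_of_insert_not_mem hT hwT
      by_cases hg : g T = true
      · rw [growW_nt hwT hg]; exact (h.w3 T hTR hne).trans (Finset.subset_insert _ _)
      · rw [growW_nf hwT (Bool.not_eq_true _ ▸ hg : g T = false)]
        exact Finset.insert_subset_insert _ (h.w3 T hTR hne)
  -- w4
  · intro T hT hne
    by_cases hwT : w ∈ T
    · by_cases hc : (T.erase w).Nonempty ∧ g (T.erase w) = false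
      · rw [growW_mf hwT hc.1 hc.2]
        exact h.w4 _ (Finset.subset_insert_iff.1 hT) hc.1
      · rw [growW_mn hwT hc]
        exact Finset.insert_nonempty _ _
    · have hTR := subset_of_insert_not_mem hT hwT
      by_cases hg : g T = true
      · rw [growW_nt hwT hg]; exact h.w4 T hTR hne
      · rw [growW_nf hwT (Bool.not_eq_true _ ▸ hg : g T = false)]
        exact h.w4 T hTR hne
  -- w5
  · intro T hT hne T' h1 h2
    by_cases hwT : w ∈ T
    · by_cases hc : (T.erase w).Nonempty ∧ g (T.erase w) = false
      · rw [growW_mf hwT hc.1 hc.2] at h1 h2 ⊢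
        have := grow_aux_f h hw _ (Finset.subset_insert_iff.1 hT) hc.1 hc.2 T' h1 h2
        exact ⟨this.1, by rw [this.2, growg_mem hwT]⟩
      · rw [growW_mn hwT hc] at h1 h2 ⊢
        have reg := reg_true_of_not (Finset.subset_insert_iff.1 hT) hc
        have := grow_aux_n h hw _ reg T' h1 h2
        exact ⟨this.1, by rw [this.2, growg_mem hwT]⟩
    · have hTR := subset_of_insert_not_mem hT hwT
      by_cases hg : g T = true
      · rw [growW_nt hwT hg] at h1 h2 ⊢
        have hsub := h.w5 T hTR hne T' h1 h2
        have hT'R : T' ⊆ R := h2.trans (h.w3 T hTR hne)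
        have hwT' : w ∉ T' := fun hc' => hw (hT'R hc')
        refine ⟨?_, ?_⟩
        · rw [growW_nt hwT' (hsub.2.trans hg), hsub.1]
        · rw [growg_notmem hwT', growg_notmem hwT]; exact hsub.2
      · have hgf : g T = false := Bool.not_eq_true _ ▸ hg
        rw [growW_nf hwT hgf] at h1 h2 ⊢
        have := grow_aux_f h hw T hTR hne hgf T' h1 h2
        exact ⟨this.1, by rw [this.2, growg_notmem hwT, hgf]⟩
  -- w6t
  · intro T hT hne hg
    have hwT : w ∉ T := by
      intro hc; rw [growg_mem hc] at hg; cases hg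
    rw [growg_notmem hwT] at hg
    have hTR := subset_of_insert_not_mem hT hwT
    rw [growW_nt hwT hg]
    exact h.w6t T hTR hne hg
  -- w6f
  · intro T hT hne hg
    by_cases hwT : w ∈ T
    · by_cases hc : (T.erase w).Nonempty ∧ g (T.erase w) = false
      · rw [growW_mf hwT hc.1 hc.2]
        have hB := h.w3 _ (Finset.subset_insert_iff.1 hT) hc.1
        have hwB : w ∉ (W (T.erase w)).2 := fun hc' => hw (hB hc')
        rw [Finset.card_insert_of_notMem hwB]
        have := h.w6f _ (Finset.subset_insert_iff.1 hT) hc.1 hc.2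
        omega
      · rw [growW_mn hwT hc]
        have reg := reg_true_of_not (Finset.subset_insert_iff.1 hT) hc
        have hwB : w ∉ (P₁ (T.erase w)).2 := fun hc' => hw ((h.n1 _ reg).2.2 hc')
        rw [Finset.card_insert_of_notMem hwB]
        by_cases hbe : (P₁ (T.erase w)).1 = ∅
        · have := h.n2e _ reg hbe
          rw [this]
          simp only []
          omega
        · have := h.n2n _ reg (Finset.nonempty_iff_ne_empty.2 hbe)
          omega
    · have hTR := subset_of_insert_not_mem hT hwT
      rw [growg_notmem hwT] at hg
      rw [growW_nf hwT hg]
      have hwB : w ∉ (W T).2 := fun hc' => hw (h.w3 T hTR hne hc')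
      rw [Finset.card_insert_of_notMem hwB]
      have := h.w6f T hTR hne hg
      omega
  -- n1
  · intro T hT
    have := h.n1 T (regN T hT)
    exact ⟨this.1, this.2.1, this.2.2.trans (Finset.subset_insert _ _)⟩
  -- n2e
  · intro T hT; exact h.n2e T (regN T hT)
  -- n2n
  · intro T hT; exact h.n2n T (regN T hT)
  -- n3
  · intro T hT T' h1 h2
    have := h.n3 T (regN T hT) T' h1 h2
    exact ⟨regN' T' this.1, this.2⟩
  -- d1
  · intro T hT
    by_cases hc : (T.erase w).Nonempty ∧ g (T.erase w) = true
    · -- branch 1 : W-based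
      rw [growP₂_t hc.1 hc.2]
      have hT₀R : T.erase w ⊆ R := by
        rcases hT with rfl | ⟨hT, _, _⟩
        · simp
        · exact Finset.subset_insert_iff.1 hT
      have hwT : w ∈ T := by
        by_contra hwT
        have heq : T.erase w = T := Finset.erase_eq_of_notMem hwT
        rcases hT with rfl | ⟨_, hne, hgT⟩
        · rw [heq] at hc; simp at hc
        · rw [growg_notmem hwT] at hgT
          rw [heq] at hc
          rw [hc.2] at hgT; cases hgT
      refine ⟨Finset.insert_subset hwT ((h.w1 _ hT₀R hc.1).trans (Finset.erase_subset _ _)), ?_, ?_⟩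
      · exact fun x hx => mem_top_of_mem hx (h.w2 _ hT₀R hc.1)
      · exact Finset.insert_subset_insert _ (h.w3 _ hT₀R hc.1)
    · rw [growP₂_f hc]
      have hT₀R : T.erase w ⊆ R := by
        rcases hT with rfl | ⟨hT, _, _⟩
        · simp
        · exact Finset.subset_insert_iff.1 hT
      have reg := reg_false_of_not hT₀R hc
      obtain ⟨hd1, hd2, hd3⟩ := h.d1 _ reg
      refine ⟨hd1.trans (Finset.erase_subset _ _), ?_, Finset.insert_subset_insert _ hd3⟩
      · exact fun x hx => mem_top_of_mem hx hd2
  -- d2e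
  · intro T hT hbe
    by_cases hc : (T.erase w).Nonempty ∧ g (T.erase w) = true
    · rw [growP₂_t hc.1 hc.2] at hbe ⊢
      simp only [] at hbe
      exact absurd hbe (Finset.insert_ne_empty _ _)
    · rw [growP₂_f hc] at hbe ⊢
      have hT₀R : T.erase w ⊆ R := by
        rcases hT with rfl | ⟨hT, _, _⟩
        · simp
        · exact Finset.subset_insert_iff.1 hT
      have reg := reg_false_of_not hT₀R hc
      simp only [] at hbe
      rw [h.d2e _ reg hbe]
  -- d2n
  · intro T hT hbn
    by_cases hc : (T.erase w).Nonempty ∧ g (T.erase w) = true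
    · rw [growP₂_t hc.1 hc.2]
      have hT₀R : T.erase w ⊆ R := by
        rcases hT with rfl | ⟨hT, _, _⟩
        · simp
        · exact Finset.subset_insert_iff.1 hT
      have hwB : w ∉ (W (T.erase w)).2 := fun hc' => hw (h.w3 _ hT₀R hc.1 hc')
      simp only []
      rw [Finset.card_insert_of_notMem hwB]
      have := h.w6t _ hT₀R hc.1 hc.2
      omega
    · rw [growP₂_f hc] at hbn ⊢
      have hT₀R : T.erase w ⊆ R := by
        rcases hT with rfl | ⟨hT, _, _⟩
        · simp
        · exact Finset.subset_insert_iff.1 hT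
      have reg := reg_false_of_not hT₀R hc
      simp only [] at hbn
      have hwB : w ∉ (P₂ (T.erase w)).2 := fun hc' => hw ((h.d1 _ reg).2.2 hc')
      simp only []
      rw [Finset.card_insert_of_notMem hwB]
      have := h.d2n _ reg hbn
      omega
  -- d3
  · intro T hT T' h1 h2
    by_cases hc : (T.erase w).Nonempty ∧ g (T.erase w) = true
    · rw [growP₂_t hc.1 hc.2] at h1 h2 ⊢
      have hT₀R : T.erase w ⊆ R := by
        rcases hT with rfl | ⟨hT, _, _⟩
        · simp
        · exact Finset.subset_insert_iff.1 hT
      have hA := h.w1 _ hT₀R hc.1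
      have hB := h.w3 _ hT₀R hc.1
      have hwA : w ∉ (W (T.erase w)).1 := fun hc' => hw (hT₀R (hA hc'))
      have hwT' : w ∈ T' := h1 (Finset.mem_insert_self _ _)
      have hAT'e : (W (T.erase w)).1 ⊆ T'.erase w :=
        Finset.subset_erase.2 ⟨(Finset.subset_insert _ _).trans h1, hwA⟩
      have hT'eB : T'.erase w ⊆ (W (T.erase w)).2 := Finset.subset_insert_iff.1 h2
      have hsub := h.w5 _ hT₀R hc.1 (T'.erase w) hAT'e hT'eB
      constructor
      · right
        refine ⟨?_, ⟨w, hwT'⟩, growg_mem hwT'⟩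
        intro x hx
        rcases eq_or_ne x w with rfl | hne
        · exact Finset.mem_insert_self _ _
        · exact Finset.mem_insert_of_mem (hB (hT'eB (Finset.mem_erase.2 ⟨hne, hx⟩)))
      · rw [growP₂_t ((h.w4 _ hT₀R hc.1).mono hAT'e) (hsub.2.trans hc.2), hsub.1]
    · rw [growP₂_f hc] at h1 h2 ⊢
      have hT₀R : T.erase w ⊆ R := by
        rcases hT with rfl | ⟨hT, _, _⟩
        · simp
        · exact Finset.subset_insert_iff.1 hT
      have reg := reg_false_of_not hT₀R hc
      obtain ⟨hd1, hd2, hd3⟩ := h.d1 _ reg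
      have hwA : w ∉ (P₂ (T.erase w)).1 := fun hc' => (Finset.notMem_erase w T) (hd1 hc')
      have hAT'e : (P₂ (T.erase w)).1 ⊆ T'.erase w := Finset.subset_erase.2 ⟨h1, hwA⟩
      have hT'eB : T'.erase w ⊆ (P₂ (T.erase w)).2 := Finset.subset_insert_iff.1 h2
      have hsub := h.d3 _ reg (T'.erase w) hAT'e hT'eB
      constructor
      · by_cases hT'e : T' = ∅
        · exact Or.inl hT'e
        · right
          have hT'ne : T'.Nonempty := Finset.nonempty_iff_ne_empty.2 hT'e
          refine ⟨?_, hT'ne, ?_⟩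
          · intro x hx
            rcases eq_or_ne x w with rfl | hne
            · exact Finset.mem_insert_self _ _
            · exact Finset.mem_insert_of_mem (hd3 (hT'eB (Finset.mem_erase.2 ⟨hne, hx⟩)))
          · by_cases hwT' : w ∈ T'
            · exact growg_mem hwT'
            · rw [growg_notmem hwT']
              have heq : T'.erase w = T' := Finset.erase_eq_of_notMem hwT'
              rw [heq] at hsub
              rcases hsub.1 with rfl | ⟨_, _, hg⟩
              · exact absurd rfl hT'e
              · exact hg
      · rw [growP₂_f (not_nt_of_reg_false hsub.1), hsub.2]

end Grow

lemma bh_exists (R : Finset ι) :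
    ∃ (E C : Finset ι) (W : Finset ι → Finset ι × Finset ι) (g : Finset ι → Bool)
      (P₁ P₂ : Finset ι → Finset ι × Finset ι),
      BHS R E C (E.card + 1) C.card (E.card + 1) (C.card + 1) W g P₁ P₂ ∧
        E.card + C.card = R.card ∧ (C.card = E.card ∨ C.card = E.card + 1) := by
  induction R using Finset.induction_on with
  | empty =>
      refine ⟨∅, ∅, fun _ => (∅, ∅), fun _ => true, fun _ => (∅, ∅), fun _ => (∅, ∅),
        ?_, by simp, Or.inl rfl⟩
      have hvac : ∀ T : Finset ι, T ⊆ (∅ : Finset ι) → T.Nonempty → False := by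
        intro T hT hne
        rw [Finset.subset_empty.1 hT] at hne
        simp at hne
      have hreg : ∀ (g : Finset ι → Bool) (b : Bool) (T : Finset ι),
          Reg (∅ : Finset ι) g b T → T = ∅ := by
        rintro g b T (rfl | ⟨hT, hne, _⟩)
        · rfl
        · exact absurd hne (by rw [Finset.subset_empty.1 hT]; simp)
      refine ⟨Finset.Subset.refl _, Finset.Subset.refl _,
        fun T hT hne => absurd (hvac T hT hne) id,
        fun T hT hne => absurd (hvac T hT hne) id,
        fun T hT hne => absurd (hvac T hT hne) id,
        fun T hT hne => absurd (hvac T hT hne) id,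
        fun T hT hne => absurd (hvac T hT hne) id,
        fun T hT hne => absurd (hvac T hT hne) id,
        fun T hT hne => absurd (hvac T hT hne) id,
        ?_, ?_, ?_, ?_, ?_, ?_, ?_, ?_⟩
      · intro T hT
        rw [hreg _ _ _ hT]
        exact ⟨Finset.Subset.refl _, Finset.Subset.refl _, Finset.Subset.refl _⟩
      · intro T hT _; rfl
      · intro T hT hne
        exact absurd hne (by simp)
      · intro T hT T' h1 h2
        have : T' = ∅ := Finset.subset_empty.1 h2
        subst this
        exact ⟨Or.inl rfl, rfl⟩
      · intro T hT
        rw [hreg _ _ _ hT]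
        exact ⟨Finset.Subset.refl _, Finset.Subset.refl _, Finset.Subset.refl _⟩
      · intro T hT _; rfl
      · intro T hT hne
        exact absurd hne (by simp)
      · intro T hT T' h1 h2
        have : T' = ∅ := Finset.subset_empty.1 h2
        subst this
        exact ⟨Or.inl rfl, rfl⟩
  | @insert w R hw ih =>
      obtain ⟨E, C, W, g, P₁, P₂, hbhs, hcard, hbal⟩ := ih
      rcases hbal with hbal | hbal
      · have hwC : w ∉ C := fun hc => hw (hbhs.hE₂ hc)
        have hcard' : (insert w C).card = C.card + 1 := Finset.card_insert_of_notMem hwC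
        refine ⟨E, insert w C, growW w W P₁ g, growg w g, P₁, growP₂ w W P₂ g, ?_, ?_, ?_⟩
        · rw [hcard']
          exact hbhs.grow hw (by omega) (by omega) (by omega) (by omega) (by omega)
        · rw [hcard', Finset.card_insert_of_notMem hw]; omega
        · rw [hcard']; omega
      · have hwE : w ∉ E := fun hc => hw (hbhs.hE₁ hc)
        have hcard' : (insert w E).card = E.card + 1 := Finset.card_insert_of_notMem hwE
        have h2 := (hbhs.swap.grow hw (t₂' := E.card + 2) (s₂' := E.card + 2)
          (by omega) (by omega) (by omega) (by omega) (by omega)).swap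
        refine ⟨insert w E, C, growW w W P₂ (fun T => !g T),
          (fun T => !growg w (fun T => !g T) T), growP₂ w W P₁ (fun T => !g T), P₂,
          ?_, ?_, ?_⟩
        · rw [hcard']
          convert h2 using 2 <;> omega
        · rw [hcard', Finset.card_insert_of_notMem hw]; omega
        · rw [hcard']; omega

lemma bhkty (R : Finset ι) :
    ∃ P : Finset ι → Finset ι × Finset ι,
      ∀ T, T ⊆ R → T.Nonempty →
        (P T).1.Nonempty ∧ (P T).1 ⊆ T ∧ T ⊆ (P T).2 ∧ (P T).2 ⊆ R ∧
        R.card - (P T).2.card ≤ R.card / 2 ∧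
        ∀ T', (P T).1 ⊆ T' → T' ⊆ (P T).2 → P T' = P T := by
  obtain ⟨E, C, W, g, P₁, P₂, h, hcard, hbal⟩ := bh_exists R
  refine ⟨W, fun T hT hne => ⟨h.w4 T hT hne, h.w1 T hT hne, h.w2 T hT hne,
    h.w3 T hT hne, ?_, fun T' h1 h2 => (h.w5 T hT hne T' h1 h2).1⟩⟩
  cases hg : g T with
  | true => have := h.w6t T hT hne hg; omega
  | false => have := h.w6f T hT hne hg; omega


attribute [local instance] Classical.propDecidable

noncomputable def least {n : ℕ} (i₀ : Fin n) (s : Finset (Fin n)) : Fin n :=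
  if h : s.Nonempty then s.min' h else i₀

lemma least_mem {n : ℕ} (i₀ : Fin n) {s : Finset (Fin n)} (h : s.Nonempty) :
    least i₀ s ∈ s := by
  rw [least, dif_pos h]; exact s.min'_mem h

lemma not_mem_of_lt_least {n : ℕ} (i₀ : Fin n) {s : Finset (Fin n)} (h : s.Nonempty)
    {i : Fin n} (hi : i < least i₀ s) : i ∉ s := by
  rw [least, dif_pos h] at hi
  intro hmem
  exact absurd (s.min'_le i hmem) (not_le.2 hi)

lemma least_eq_of {n : ℕ} (i₀ : Fin n) {s : Finset (Fin n)} {x : Fin n}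
    (hx : x ∈ s) (h : ∀ y, y < x → y ∉ s) : least i₀ s = x := by
  have hne : s.Nonempty := ⟨x, hx⟩
  rw [least, dif_pos hne]
  exact le_antisymm (s.min'_le x hx) (le_of_not_gt fun hlt => h _ hlt (s.min'_mem hne))

/-- Bundled context for the lower-bound construction. -/
structure Ctx (n p q : ℕ) where
  u : Fin q → Fin n → ℕ
  v : Fin p → Fin n → ℕ
  κ : Fin p → Fin q
  P : Finset (Fin q) → Finset (Fin q) × Finset (Fin q)
  i₀ : Fin n
  hκ : ∀ j, u (κ j) ≤ v j
  hRcard : (Finset.univ \ Finset.image κ Finset.univ).card = q - p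
  hP : ∀ T, T ⊆ Finset.univ \ Finset.image κ Finset.univ → T.Nonempty →
    (P T).1.Nonempty ∧ (P T).1 ⊆ T ∧ T ⊆ (P T).2 ∧
    (P T).2 ⊆ Finset.univ \ Finset.image κ Finset.univ ∧
    (Finset.univ \ Finset.image κ Finset.univ).card - (P T).2.card ≤
      (Finset.univ \ Finset.image κ Finset.univ).card / 2 ∧
    ∀ T', (P T).1 ⊆ T' → T' ⊆ (P T).2 → P T' = P T

namespace Ctx

variable {n p q : ℕ} (Γ : Ctx n p q)

def R : Finset (Fin q) := Finset.univ \ Finset.image Γ.κ Finset.univ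

def M : Set (Fin n → ℕ) := upSet (Set.range Γ.u) \ upSet (Set.range Γ.v)

def defV (j : Fin p) (c : Fin n → ℕ) : Finset (Fin n) :=
  Finset.univ.filter fun i => c i < Γ.v j i

def defU (k : Fin q) (c : Fin n → ℕ) : Finset (Fin n) :=
  Finset.univ.filter fun i => c i < Γ.u k i

def pos (j : Fin p) (c : Fin n → ℕ) : Prop := Γ.u (Γ.κ j) ≤ c

noncomputable def pin (j : Fin p) (c : Fin n → ℕ) : Fin n :=
  if Γ.pos j c then least Γ.i₀ (Γ.defV j c) else least Γ.i₀ (Γ.defU (Γ.κ j) c)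

noncomputable def blockC (j : Fin p) (c : Fin n → ℕ) (i : Fin n) : ℕ :=
  if Γ.pos j c then
    (if i < Γ.pin j c then Γ.v j i else if i = Γ.pin j c then c i else Γ.u (Γ.κ j) i)
  else
    (if i < Γ.pin j c then Γ.u (Γ.κ j) i else if i = Γ.pin j c then c i else 0)

def allNeg (c : Fin n → ℕ) : Prop := ∀ j, ¬ Γ.pos j c

noncomputable def Tset (c : Fin n → ℕ) : Finset (Fin q) := Γ.R.filter fun k => Γ.u k ≤ c

noncomputable def outB (c : Fin n → ℕ) : Finset (Fin q) := Γ.R \ (Γ.P (Γ.Tset c)).2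

noncomputable def pinE (k : Fin q) (c : Fin n → ℕ) : Fin n := least Γ.i₀ (Γ.defU k c)

noncomputable def extraC (k : Fin q) (c : Fin n → ℕ) (i : Fin n) : ℕ :=
  if i < Γ.pinE k c then Γ.u k i else if i = Γ.pinE k c then c i else 0

noncomputable def acert (c : Fin n → ℕ) (i : Fin n) : ℕ :=
  (Finset.univ.sup fun j : Fin p => Γ.blockC j c i) ⊔
  (if Γ.allNeg c then
     ((Γ.P (Γ.Tset c)).1.sup fun k => Γ.u k i) ⊔ ((Γ.outB c).sup fun k => Γ.extraC k c i)
   else 0)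

noncomputable def pins (c : Fin n → ℕ) : Finset (Fin n) :=
  (Finset.univ.image fun j : Fin p => Γ.pin j c) ∪
  (if Γ.allNeg c then (Γ.outB c).image fun k => Γ.pinE k c else ∅)

noncomputable def Zc (c : Fin n → ℕ) : Finset (Fin n) := Finset.univ \ Γ.pins c

noncomputable def Phi (c : Fin n → ℕ) : (Fin n → ℕ) × Finset (Fin n) := (Γ.acert c, Γ.Zc c)

/- basic membership facts -/

lemma mem_M_iff {c : Fin n → ℕ} :
    c ∈ Γ.M ↔ (∃ k, Γ.u k ≤ c) ∧ ∀ j, ¬ Γ.v j ≤ c := by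
  constructor
  · rintro ⟨⟨a, ⟨k, rfl⟩, hle⟩, hnv⟩
    exact ⟨⟨k, hle⟩, fun j hje => hnv ⟨Γ.v j, ⟨j, rfl⟩, hje⟩⟩
  · rintro ⟨⟨k, hk⟩, hnv⟩
    refine ⟨⟨Γ.u k, ⟨k, rfl⟩, hk⟩, ?_⟩
    rintro ⟨a, ⟨j, rfl⟩, hje⟩
    exact hnv j hje

lemma defV_ne {c : Fin n → ℕ} {j : Fin p} (h : ¬ Γ.v j ≤ c) : (Γ.defV j c).Nonempty := by
  rw [Pi.le_def, not_forall] at h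
  obtain ⟨i, hi⟩ := h
  exact ⟨i, by simp [defV, not_le.1 hi]⟩

lemma defU_ne {c : Fin n → ℕ} {k : Fin q} (h : ¬ Γ.u k ≤ c) : (Γ.defU k c).Nonempty := by
  rw [Pi.le_def, not_forall] at h
  obtain ⟨i, hi⟩ := h
  exact ⟨i, by simp [defU, not_le.1 hi]⟩

lemma mem_defV {c : Fin n → ℕ} {j : Fin p} {i : Fin n} :
    i ∈ Γ.defV j c ↔ c i < Γ.v j i := by simp [defV]

lemma mem_defU {c : Fin n → ℕ} {k : Fin q} {i : Fin n} :
    i ∈ Γ.defU k c ↔ c i < Γ.u k i := by simp [defU]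

lemma mem_R {k : Fin q} : k ∈ Γ.R ↔ ∀ j, Γ.κ j ≠ k := by
  simp [R]


section Main

variable {c : Fin n → ℕ}

lemma pin_pos (hI : ∀ j, ¬ Γ.v j ≤ c) {j : Fin p} (hp : Γ.pos j c) :
    c (Γ.pin j c) < Γ.v j (Γ.pin j c) ∧ ∀ i, i < Γ.pin j c → Γ.v j i ≤ c i := by
  have hne := Γ.defV_ne (hI j)
  have hpin : Γ.pin j c = least Γ.i₀ (Γ.defV j c) := if_pos hp
  rw [hpin]
  refine ⟨Γ.mem_defV.1 (least_mem _ hne), fun i hi => ?_⟩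
  exact le_of_not_gt fun hlt => not_mem_of_lt_least _ hne hi (Γ.mem_defV.2 hlt)

lemma pin_neg {j : Fin p} (hp : ¬ Γ.pos j c) :
    c (Γ.pin j c) < Γ.u (Γ.κ j) (Γ.pin j c) ∧ ∀ i, i < Γ.pin j c → Γ.u (Γ.κ j) i ≤ c i := by
  have hne := Γ.defU_ne hp
  have hpin : Γ.pin j c = least Γ.i₀ (Γ.defU (Γ.κ j) c) := if_neg hp
  rw [hpin]
  refine ⟨Γ.mem_defU.1 (least_mem _ hne), fun i hi => ?_⟩
  exact le_of_not_gt fun hlt => not_mem_of_lt_least _ hne hi (Γ.mem_defU.2 hlt)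

lemma pinE_spec {k : Fin q} (h : ¬ Γ.u k ≤ c) :
    c (Γ.pinE k c) < Γ.u k (Γ.pinE k c) ∧ ∀ i, i < Γ.pinE k c → Γ.u k i ≤ c i := by
  have hne := Γ.defU_ne h
  refine ⟨Γ.mem_defU.1 (least_mem _ hne), fun i hi => ?_⟩
  exact le_of_not_gt fun hlt => not_mem_of_lt_least _ hne hi (Γ.mem_defU.2 hlt)

/- blockC computation lemmas -/

lemma blockC_pos_lt {j : Fin p} (hp : Γ.pos j c) {i : Fin n} (h : i < Γ.pin j c) :
    Γ.blockC j c i = Γ.v j i := by simp [blockC, hp, h]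

lemma blockC_pos_gt {j : Fin p} (hp : Γ.pos j c) {i : Fin n}
    (h1 : ¬ i < Γ.pin j c) (h2 : i ≠ Γ.pin j c) : Γ.blockC j c i = Γ.u (Γ.κ j) i := by
  simp [blockC, hp, h1, h2]

lemma blockC_neg_lt {j : Fin p} (hp : ¬ Γ.pos j c) {i : Fin n} (h : i < Γ.pin j c) :
    Γ.blockC j c i = Γ.u (Γ.κ j) i := by simp [blockC, hp, h]

lemma blockC_neg_gt {j : Fin p} (hp : ¬ Γ.pos j c) {i : Fin n}
    (h1 : ¬ i < Γ.pin j c) (h2 : i ≠ Γ.pin j c) : Γ.blockC j c i = 0 := by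
  simp [blockC, hp, h1, h2]

lemma blockC_pin {j : Fin p} : Γ.blockC j c (Γ.pin j c) = c (Γ.pin j c) := by
  by_cases hp : Γ.pos j c <;> simp [blockC, hp]

lemma extraC_pin {k : Fin q} : Γ.extraC k c (Γ.pinE k c) = c (Γ.pinE k c) := by
  simp [extraC]

lemma blockC_le (hI : ∀ j, ¬ Γ.v j ≤ c) (j : Fin p) (i : Fin n) :
    Γ.blockC j c i ≤ c i := by
  by_cases hp : Γ.pos j c
  · obtain ⟨h1, h2⟩ := Γ.pin_pos hI hp
    rcases lt_trichotomy i (Γ.pin j c) with h | h | h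
    · rw [Γ.blockC_pos_lt hp h]; exact h2 i h
    · rw [h, Γ.blockC_pin]
    · rw [Γ.blockC_pos_gt hp (not_lt.2 h.le) (ne_of_gt h)]; exact hp i
  · obtain ⟨h1, h2⟩ := Γ.pin_neg hp
    rcases lt_trichotomy i (Γ.pin j c) with h | h | h
    · rw [Γ.blockC_neg_lt hp h]; exact h2 i h
    · rw [h, Γ.blockC_pin]
    · rw [Γ.blockC_neg_gt hp (not_lt.2 h.le) (ne_of_gt h)]; exact Nat.zero_le _

lemma Tset_subR : Γ.Tset c ⊆ Γ.R := Finset.filter_subset _ _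

lemma Tset_ne (hJ : ∃ k, Γ.u k ≤ c) (hneg : Γ.allNeg c) : (Γ.Tset c).Nonempty := by
  obtain ⟨k, hk⟩ := hJ
  refine ⟨k, Finset.mem_filter.2 ⟨Γ.mem_R.2 fun j hj => hneg j ?_, hk⟩⟩
  rw [pos, hj]; exact hk

lemma memA_le (hJ : ∃ k, Γ.u k ≤ c) (hneg : Γ.allNeg c) {k : Fin q}
    (hk : k ∈ (Γ.P (Γ.Tset c)).1) : Γ.u k ≤ c := by
  have hPs := Γ.hP (Γ.Tset c) Γ.Tset_subR (Γ.Tset_ne hJ hneg)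
  exact (Finset.mem_filter.1 (hPs.2.1 hk)).2

lemma outB_not_le (hJ : ∃ k, Γ.u k ≤ c) (hneg : Γ.allNeg c) {k : Fin q}
    (hk : k ∈ Γ.outB c) : ¬ Γ.u k ≤ c := by
  have hPs := Γ.hP (Γ.Tset c) Γ.Tset_subR (Γ.Tset_ne hJ hneg)
  obtain ⟨hkR, hkB⟩ := Finset.mem_sdiff.1 hk
  intro hle
  exact hkB (hPs.2.2.1 (Finset.mem_filter.2 ⟨hkR, hle⟩))

lemma extraC_le (hJ : ∃ k, Γ.u k ≤ c) (hneg : Γ.allNeg c) {k : Fin q}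
    (hk : k ∈ Γ.outB c) (i : Fin n) : Γ.extraC k c i ≤ c i := by
  obtain ⟨h1, h2⟩ := Γ.pinE_spec (Γ.outB_not_le hJ hneg hk)
  rcases lt_trichotomy i (Γ.pinE k c) with h | h | h
  · rw [extraC, if_pos h]; exact h2 i h
  · rw [h, Γ.extraC_pin]
  · rw [extraC, if_neg (not_lt.2 h.le), if_neg (ne_of_gt h)]; exact Nat.zero_le _

lemma acert_le (hc : c ∈ Γ.M) : Γ.acert c ≤ c := by
  obtain ⟨hJ, hI⟩ := Γ.mem_M_iff.1 hc
  intro i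
  rw [acert]
  refine sup_le (Finset.sup_le fun j _ => Γ.blockC_le hI j i) ?_
  by_cases hneg : Γ.allNeg c
  · rw [if_pos hneg]
    refine sup_le (Finset.sup_le fun k hk => Γ.memA_le hJ hneg hk i)
      (Finset.sup_le fun k hk => Γ.extraC_le hJ hneg hk i)
  · rw [if_neg hneg]; exact Nat.zero_le _

lemma blockC_le_acert (j : Fin p) (i : Fin n) : Γ.blockC j c i ≤ Γ.acert c i := by
  rw [acert]
  exact le_trans (Finset.le_sup (f := fun j => Γ.blockC j c i) (Finset.mem_univ j)) le_sup_left

lemma A_le_acert (hneg : Γ.allNeg c) {k : Fin q} (hk : k ∈ (Γ.P (Γ.Tset c)).1)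
    (i : Fin n) : Γ.u k i ≤ Γ.acert c i := by
  rw [acert, if_pos hneg]
  exact le_trans (le_trans (Finset.le_sup (f := fun k => Γ.u k i) hk) le_sup_left) le_sup_right

lemma extraC_le_acert (hneg : Γ.allNeg c) {k : Fin q} (hk : k ∈ Γ.outB c)
    (i : Fin n) : Γ.extraC k c i ≤ Γ.acert c i := by
  rw [acert, if_pos hneg]
  exact le_trans (le_trans (Finset.le_sup (f := fun k => Γ.extraC k c i) hk) le_sup_right)
    le_sup_right

lemma pin_mem_pins (j : Fin p) : Γ.pin j c ∈ Γ.pins c :=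
  Finset.mem_union_left _ (Finset.mem_image_of_mem _ (Finset.mem_univ j))

lemma pinE_mem_pins (hneg : Γ.allNeg c) {k : Fin q} (hk : k ∈ Γ.outB c) :
    Γ.pinE k c ∈ Γ.pins c := by
  refine Finset.mem_union_right _ ?_
  rw [if_pos hneg]
  exact Finset.mem_image_of_mem _ hk

lemma acert_pin (hc : c ∈ Γ.M) {i : Fin n} (hi : i ∈ Γ.pins c) :
    Γ.acert c i = c i := by
  refine le_antisymm (Γ.acert_le hc i) ?_
  rcases Finset.mem_union.1 hi with h | h
  · obtain ⟨j, _, hj⟩ := Finset.mem_image.1 h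
    calc c i = Γ.blockC j c i := by rw [← hj, Γ.blockC_pin]
    _ ≤ Γ.acert c i := Γ.blockC_le_acert j i
  · by_cases hneg : Γ.allNeg c
    · rw [if_pos hneg] at h
      obtain ⟨k, hk, hkE⟩ := Finset.mem_image.1 h
      calc c i = Γ.extraC k c i := by rw [← hkE, Γ.extraC_pin]
      _ ≤ Γ.acert c i := Γ.extraC_le_acert hneg hk i
    · rw [if_neg hneg] at h; simp at h

lemma self_mem (hc : c ∈ Γ.M) : c ∈ SInterval (Γ.acert c) (Γ.Zc c) := by
  refine ⟨Γ.acert_le hc, fun i hi => ?_⟩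
  have : i ∈ Γ.pins c := by
    by_contra hnot
    exact hi (Finset.mem_sdiff.2 ⟨Finset.mem_univ _, hnot⟩)
  exact (Γ.acert_pin hc this).symm


lemma main (hc : c ∈ Γ.M) {c' : Fin n → ℕ}
    (hc' : c' ∈ SInterval (Γ.acert c) (Γ.Zc c)) :
    c' ∈ Γ.M ∧ Γ.Phi c' = Γ.Phi c := by
  obtain ⟨hJ, hI⟩ := Γ.mem_M_iff.1 hc
  obtain ⟨hge, hoff⟩ := hc'
  have hpinval : ∀ i ∈ Γ.pins c, c' i = c i := by
    intro i hi
    have hnz : i ∉ Γ.Zc c := by simp [Zc, hi]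
    exact (hoff i hnz).trans (Γ.acert_pin hc hi)
  have posfwd : ∀ j, Γ.pos j c → Γ.pos j c' := by
    intro j hp i
    rcases lt_trichotomy i (Γ.pin j c) with h | h | h
    · calc Γ.u (Γ.κ j) i ≤ Γ.v j i := Γ.hκ j i
        _ = Γ.blockC j c i := (Γ.blockC_pos_lt hp h).symm
        _ ≤ Γ.acert c i := Γ.blockC_le_acert j i
        _ ≤ c' i := hge i
    · rw [h, hpinval _ (Γ.pin_mem_pins j)]
      exact hp _
    · calc Γ.u (Γ.κ j) i
          = Γ.blockC j c i := (Γ.blockC_pos_gt hp (not_lt.2 h.le) (ne_of_gt h)).symm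
        _ ≤ Γ.acert c i := Γ.blockC_le_acert j i
        _ ≤ c' i := hge i
  have posbwd : ∀ j, ¬ Γ.pos j c → ¬ Γ.pos j c' := by
    intro j hp hco
    have h1 := (Γ.pin_neg hp).1
    have h2 := hco (Γ.pin j c)
    rw [hpinval _ (Γ.pin_mem_pins j)] at h2
    exact absurd h2 (not_le.2 h1)
  have posiff : ∀ j, Γ.pos j c' ↔ Γ.pos j c := by
    intro j
    by_cases hp : Γ.pos j c
    · exact ⟨fun _ => hp, fun _ => posfwd j hp⟩
    · exact ⟨fun h => absurd h (posbwd j hp), fun h => absurd h hp⟩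
  have noV : ∀ j, ¬ Γ.v j ≤ c' := by
    intro j hle
    by_cases hp : Γ.pos j c
    · have h1 := (Γ.pin_pos hI hp).1
      have h2 := hle (Γ.pin j c)
      rw [hpinval _ (Γ.pin_mem_pins j)] at h2
      exact absurd h2 (not_le.2 h1)
    · have h1 := (Γ.pin_neg hp).1
      have h3 := Γ.hκ j (Γ.pin j c)
      have h2 := hle (Γ.pin j c)
      rw [hpinval _ (Γ.pin_mem_pins j)] at h2
      exact absurd h2 (not_le.2 (lt_of_lt_of_le h1 h3))
  have hnegiff : Γ.allNeg c' ↔ Γ.allNeg c := by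
    unfold allNeg
    exact forall_congr' fun j => not_congr (posiff j)
  have hpin' : ∀ j, Γ.pin j c' = Γ.pin j c := by
    intro j
    by_cases hp : Γ.pos j c
    · have hp' : Γ.pos j c' := posfwd j hp
      have heq : Γ.pin j c' = least Γ.i₀ (Γ.defV j c') := if_pos hp'
      rw [heq]
      apply least_eq_of
      · rw [Γ.mem_defV, hpinval _ (Γ.pin_mem_pins j)]
        exact (Γ.pin_pos hI hp).1
      · intro y hy
        rw [Γ.mem_defV, not_lt]
        calc Γ.v j y = Γ.blockC j c y := (Γ.blockC_pos_lt hp hy).symm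
          _ ≤ Γ.acert c y := Γ.blockC_le_acert j y
          _ ≤ c' y := hge y
    · have hp' : ¬ Γ.pos j c' := posbwd j hp
      have heq : Γ.pin j c' = least Γ.i₀ (Γ.defU (Γ.κ j) c') := if_neg hp'
      rw [heq]
      apply least_eq_of
      · rw [Γ.mem_defU, hpinval _ (Γ.pin_mem_pins j)]
        exact (Γ.pin_neg hp).1
      · intro y hy
        rw [Γ.mem_defU, not_lt]
        calc Γ.u (Γ.κ j) y = Γ.blockC j c y := (Γ.blockC_neg_lt hp hy).symm
          _ ≤ Γ.acert c y := Γ.blockC_le_acert j y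
          _ ≤ c' y := hge y
  have hblock : ∀ j i, Γ.blockC j c' i = Γ.blockC j c i := by
    intro j i
    by_cases hp : Γ.pos j c
    · have hp' := posfwd j hp
      rw [blockC, blockC, if_pos hp, if_pos hp', hpin' j]
      split_ifs with h1 h2
      · rfl
      · rw [h2]; exact hpinval _ (Γ.pin_mem_pins j)
      · rfl
    · have hp' := posbwd j hp
      rw [blockC, blockC, if_neg hp, if_neg hp', hpin' j]
      split_ifs with h1 h2
      · rfl
      · rw [h2]; exact hpinval _ (Γ.pin_mem_pins j)
      · rfl
  have hJ' : ∃ k, Γ.u k ≤ c' := by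
    by_cases hneg : Γ.allNeg c
    · have hPs := Γ.hP (Γ.Tset c) Γ.Tset_subR (Γ.Tset_ne hJ hneg)
      obtain ⟨k, hk⟩ := hPs.1
      exact ⟨k, fun i => le_trans (Γ.A_le_acert hneg hk i) (hge i)⟩
    · rw [allNeg, not_forall] at hneg
      obtain ⟨j, hj⟩ := hneg
      rw [not_not] at hj
      exact ⟨Γ.κ j, posfwd j hj⟩
  refine ⟨Γ.mem_M_iff.2 ⟨hJ', noV⟩, ?_⟩
  by_cases hneg : Γ.allNeg c
  · have hneg' : Γ.allNeg c' := hnegiff.2 hneg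
    have hPs := Γ.hP (Γ.Tset c) Γ.Tset_subR (Γ.Tset_ne hJ hneg)
    have hTA : (Γ.P (Γ.Tset c)).1 ⊆ Γ.Tset c' := by
      intro k hk
      refine Finset.mem_filter.2 ⟨(Finset.mem_filter.1 (hPs.2.1 hk)).1, ?_⟩
      exact fun i => le_trans (Γ.A_le_acert hneg hk i) (hge i)
    have hTB : Γ.Tset c' ⊆ (Γ.P (Γ.Tset c)).2 := by
      intro k hk
      obtain ⟨hkR, hkle⟩ := Finset.mem_filter.1 hk
      by_contra hkB
      have hkout : k ∈ Γ.outB c := Finset.mem_sdiff.2 ⟨hkR, hkB⟩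
      have h1 := (Γ.pinE_spec (Γ.outB_not_le hJ hneg hkout)).1
      have h2 := hkle (Γ.pinE k c)
      rw [hpinval _ (Γ.pinE_mem_pins hneg hkout)] at h2
      exact absurd h2 (not_le.2 h1)
    have hAB : Γ.P (Γ.Tset c') = Γ.P (Γ.Tset c) := hPs.2.2.2.2.2 _ hTA hTB
    have houtB : Γ.outB c' = Γ.outB c := by rw [outB, outB, hAB]
    have hpinE' : ∀ k ∈ Γ.outB c, Γ.pinE k c' = Γ.pinE k c := by
      intro k hk
      apply least_eq_of
      · rw [Γ.mem_defU, hpinval _ (Γ.pinE_mem_pins hneg hk)]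
        exact (Γ.pinE_spec (Γ.outB_not_le hJ hneg hk)).1
      · intro y hy
        rw [Γ.mem_defU, not_lt]
        calc Γ.u k y = Γ.extraC k c y := by rw [extraC, if_pos hy]
          _ ≤ Γ.acert c y := Γ.extraC_le_acert hneg hk y
          _ ≤ c' y := hge y
    have hextra : ∀ k ∈ Γ.outB c, ∀ i, Γ.extraC k c' i = Γ.extraC k c i := by
      intro k hk i
      rw [extraC, extraC, hpinE' k hk]
      split_ifs with h1 h2
      · rfl
      · rw [h2]; exact hpinval _ (Γ.pinE_mem_pins hneg hk)
      · rfl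
    have hacert : Γ.acert c' = Γ.acert c := by
      funext i
      rw [acert, acert, if_pos hneg, if_pos hneg', hAB, houtB]
      congr 1
      · exact Finset.sup_congr rfl fun j _ => hblock j i
      · congr 1
        exact Finset.sup_congr rfl fun k hk => hextra k hk i
    have hpins : Γ.pins c' = Γ.pins c := by
      rw [pins, pins, if_pos hneg, if_pos hneg', houtB]
      congr 1
      · exact Finset.image_congr fun j _ => hpin' j
      · exact Finset.image_congr fun k hk => hpinE' k hk
    rw [Phi, Phi, hacert, Zc, Zc, hpins]
  · have hneg' : ¬ Γ.allNeg c' := fun h => hneg (hnegiff.1 h)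
    have hacert : Γ.acert c' = Γ.acert c := by
      funext i
      rw [acert, acert, if_neg hneg, if_neg hneg']
      congr 1
      exact Finset.sup_congr rfl fun j _ => hblock j i
    have hpins : Γ.pins c' = Γ.pins c := by
      rw [pins, pins, if_neg hneg, if_neg hneg']
      congr 1
      exact Finset.image_congr fun j _ => hpin' j
    rw [Phi, Phi, hacert, Zc, Zc, hpins]


lemma pins_card (hc : c ∈ Γ.M) : (Γ.pins c).card ≤ p + (q - p) / 2 := by
  obtain ⟨hJ, hI⟩ := Γ.mem_M_iff.1 hc
  refine le_trans (Finset.card_union_le _ _) ?_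
  have h1 : (Finset.univ.image fun j : Fin p => Γ.pin j c).card ≤ p := by
    refine le_trans Finset.card_image_le ?_
    simp
  have h2 : (if Γ.allNeg c then (Γ.outB c).image fun k => Γ.pinE k c else ∅).card
      ≤ (q - p) / 2 := by
    by_cases hneg : Γ.allNeg c
    · rw [if_pos hneg]
      refine le_trans Finset.card_image_le ?_
      have hPs := Γ.hP (Γ.Tset c) Γ.Tset_subR (Γ.Tset_ne hJ hneg)
      have hBR : (Γ.P (Γ.Tset c)).2 ⊆ Γ.R := hPs.2.2.2.1
      have hout : (Γ.outB c).card = Γ.R.card - (Γ.P (Γ.Tset c)).2.card :=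
        Finset.card_sdiff_of_subset hBR
      have hhalf : Γ.R.card - (Γ.P (Γ.Tset c)).2.card ≤ Γ.R.card / 2 := hPs.2.2.2.2.1
      have hRc : Γ.R.card = q - p := Γ.hRcard
      omega
    · rw [if_neg hneg]; simp
  omega

lemma Zc_card (hc : c ∈ Γ.M) : n - p - (q - p) / 2 ≤ (Γ.Zc c).card := by
  have h := Γ.pins_card hc
  have h2 : (Γ.Zc c).card = n - (Γ.pins c).card := by
    rw [Zc, Finset.card_sdiff_of_subset (Finset.subset_univ _), Finset.card_univ, Fintype.card_fin]
  omega

noncomputable def B0 : ℕ :=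
  (Finset.univ.sup fun k : Fin q => Finset.univ.sup (Γ.u k)) ⊔
    (Finset.univ.sup fun j : Fin p => Finset.univ.sup (Γ.v j))

lemma u_le_B0 (k : Fin q) (i : Fin n) : Γ.u k i ≤ Γ.B0 := by
  rw [B0]
  refine le_sup_of_le_left ?_
  exact le_trans (Finset.le_sup (f := Γ.u k) (Finset.mem_univ i))
    (Finset.le_sup (f := fun k => Finset.univ.sup (Γ.u k)) (Finset.mem_univ k))

lemma v_le_B0 (j : Fin p) (i : Fin n) : Γ.v j i ≤ Γ.B0 := by
  rw [B0]
  refine le_sup_of_le_right ?_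
  exact le_trans (Finset.le_sup (f := Γ.v j) (Finset.mem_univ i))
    (Finset.le_sup (f := fun j => Finset.univ.sup (Γ.v j)) (Finset.mem_univ j))

lemma acert_le_B0 (hc : c ∈ Γ.M) (i : Fin n) : Γ.acert c i ≤ Γ.B0 := by
  obtain ⟨hJ, hI⟩ := Γ.mem_M_iff.1 hc
  rw [acert]
  refine sup_le (Finset.sup_le fun j _ => ?_) ?_
  · by_cases hp : Γ.pos j c
    · rcases lt_trichotomy i (Γ.pin j c) with h | h | h
      · rw [Γ.blockC_pos_lt hp h]; exact Γ.v_le_B0 j i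
      · rw [h, Γ.blockC_pin]
        exact le_trans (Γ.pin_pos hI hp).1.le (Γ.v_le_B0 j _)
      · rw [Γ.blockC_pos_gt hp (not_lt.2 h.le) (ne_of_gt h)]; exact Γ.u_le_B0 _ i
    · rcases lt_trichotomy i (Γ.pin j c) with h | h | h
      · rw [Γ.blockC_neg_lt hp h]; exact Γ.u_le_B0 _ i
      · rw [h, Γ.blockC_pin]
        exact le_trans (Γ.pin_neg hp).1.le (Γ.u_le_B0 _ _)
      · rw [Γ.blockC_neg_gt hp (not_lt.2 h.le) (ne_of_gt h)]; exact Nat.zero_le _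
  · by_cases hneg : Γ.allNeg c
    · rw [if_pos hneg]
      refine sup_le (Finset.sup_le fun k _ => Γ.u_le_B0 k i)
        (Finset.sup_le fun k hk => ?_)
      rcases lt_trichotomy i (Γ.pinE k c) with h | h | h
      · rw [extraC, if_pos h]; exact Γ.u_le_B0 k i
      · rw [h, Γ.extraC_pin]
        exact le_trans (Γ.pinE_spec (Γ.outB_not_le hJ hneg hk)).1.le (Γ.u_le_B0 k _)
      · rw [extraC, if_neg (not_lt.2 h.le), if_neg (ne_of_gt h)]; exact Nat.zero_le _
    · rw [if_neg hneg]; exact Nat.zero_le _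

lemma interval_eq {az : (Fin n → ℕ) × Finset (Fin n)} (h : Γ.Phi az.1 = az) :
    SInterval az.1 az.2 = SInterval (Γ.acert az.1) (Γ.Zc az.1) := by
  have h1 : Γ.acert az.1 = az.1 := congrArg Prod.fst h
  have h2 : Γ.Zc az.1 = az.2 := congrArg Prod.snd h
  rw [h1, h2]

lemma lower_bound (hM : Γ.M.Nonempty) : n - p - (q - p) / 2 ≤ sdepth Γ.M := by
  classical
  set F : Finset (Fin n → ℕ) :=
    (Finset.univ : Finset (Fin n → Fin (Γ.B0 + 1))).image (fun f i => (f i : ℕ)) with hF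
  set V : Finset ((Fin n → ℕ) × Finset (Fin n)) :=
    (F ×ˢ (Finset.univ : Finset (Finset (Fin n)))).filter
      (fun az => az.1 ∈ Γ.M ∧ Γ.Phi az.1 = az) with hV
  have hPhiV : ∀ c, c ∈ Γ.M → Γ.Phi c ∈ V := by
    intro c hc
    rw [hV, Finset.mem_filter]
    refine ⟨Finset.mem_product.2 ⟨?_, Finset.mem_univ _⟩, ?_, ?_⟩
    · rw [hF, Finset.mem_image]
      exact ⟨fun i => ⟨Γ.acert c i, Nat.lt_succ_of_le (Γ.acert_le_B0 hc i)⟩,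
        Finset.mem_univ _, rfl⟩
    · exact (Γ.main hc ⟨le_refl _, fun i _ => rfl⟩).1
    · exact (Γ.main hc ⟨le_refl _, fun i _ => rfl⟩).2
  obtain ⟨c₀, hc₀⟩ := hM
  have hrpos : 0 < V.card := Finset.card_pos.2 ⟨Γ.Phi c₀, hPhiV _ hc₀⟩
  have key : ∀ x : {a // a ∈ V}, (x : (Fin n → ℕ) × Finset (Fin n)).1 ∈ Γ.M ∧
      Γ.Phi (x : (Fin n → ℕ) × Finset (Fin n)).1 = (x : (Fin n → ℕ) × Finset (Fin n)) :=
    fun x => (Finset.mem_filter.1 x.2).2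
  rw [sdepth, sdepthOn]
  refine le_csSup ⟨n, ?_⟩ ?_
  · rintro d' ⟨r, hr, a, Z, hdec, hle⟩
    calc d' ≤ (Z ⟨0, hr⟩).card := hle _
      _ ≤ (Finset.univ : Finset (Fin n)).card := Finset.card_le_univ _
      _ = n := by simp
  · refine ⟨V.card, hrpos, fun i => ((V.equivFin.symm i : {a // a ∈ V}) :
      (Fin n → ℕ) × Finset (Fin n)).1,
      fun i => ((V.equivFin.symm i : {a // a ∈ V}) : (Fin n → ℕ) × Finset (Fin n)).2,
      ⟨fun i => Finset.subset_univ _, ?_, ?_, ?_⟩, ?_⟩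
    · intro i x hx
      obtain ⟨h1, h2⟩ := key (V.equivFin.symm i)
      rw [Γ.interval_eq h2] at hx
      exact (Γ.main h1 hx).1
    · intro x hx
      refine ⟨V.equivFin ⟨Γ.Phi x, hPhiV x hx⟩, ?_⟩
      simp only [Equiv.symm_apply_apply]
      exact Γ.self_mem hx
    · intro i j hij
      rw [Set.disjoint_left]
      intro x hx1 hx2
      obtain ⟨h1i, h2i⟩ := key (V.equivFin.symm i)
      obtain ⟨h1j, h2j⟩ := key (V.equivFin.symm j)
      rw [Γ.interval_eq h2i] at hx1
      rw [Γ.interval_eq h2j] at hx2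
      have e1 : Γ.Phi x = (V.equivFin.symm i : {a // a ∈ V}) := by
        rw [(Γ.main h1i hx1).2, h2i]
      have e2 : Γ.Phi x = (V.equivFin.symm j : {a // a ∈ V}) := by
        rw [(Γ.main h1j hx2).2, h2j]
      have : V.equivFin.symm i = V.equivFin.symm j := Subtype.ext (e1 ▸ e2 ▸ rfl)
      exact hij (V.equivFin.symm.injective this)
    · intro i
      obtain ⟨h1, h2⟩ := key (V.equivFin.symm i)
      have hZ : ((V.equivFin.symm i : {a // a ∈ V}) :
          (Fin n → ℕ) × Finset (Fin n)).2 = Γ.Zc ((V.equivFin.symm i : {a // a ∈ V}) :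
          (Fin n → ℕ) × Finset (Fin n)).1 := (congrArg Prod.snd h2).symm
      show n - p - (q - p) / 2 ≤ ((V.equivFin.symm i : {a // a ∈ V}) :
          (Fin n → ℕ) × Finset (Fin n)).2.card
      rw [hZ]
      exact Γ.Zc_card h1

end Main

end Ctx


end Stmt14

/-- for monomial complete intersections `I ⊊ J ⊆ S`, `J` generated
by a regular sequence of `q` monomials, `I` by `p` monomials:
`n - p ≥ sdepth_S(J/I) ≥ n - p - ⌊(q-p)/2⌋`. -/
theorem stmt_14 {n p q : ℕ} (u : Fin q → Fin n → ℕ) (v : Fin p → Fin n → ℕ)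
    (hu : IsRegSeqM u) (hv : IsRegSeqM v)
    (hsub : upSet (Set.range v) ⊆ upSet (Set.range u))
    (hne : upSet (Set.range v) ≠ upSet (Set.range u)) :
    sdepth (upSet (Set.range u) \ upSet (Set.range v)) ≤ n - p ∧
      n - p - (q - p) / 2 ≤ sdepth (upSet (Set.range u) \ upSet (Set.range v)) := by
  classical
  set M := upSet (Set.range u) \ upSet (Set.range v) with hMdef
  have hMne : M.Nonempty := by
    have hss : upSet (Set.range v) ⊂ upSet (Set.range u) :=
      ssubset_iff_subset_ne.2 ⟨hsub, hne⟩
    obtain ⟨x, hxu, hxv⟩ := Set.exists_of_ssubset hss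
    exact ⟨x, hxu, hxv⟩
  constructor
  · -- upper bound
    rw [sdepth, sdepthOn]
    apply csSup_le'
    rintro d ⟨r, hr, a, Z, ⟨hZV, hsubM, hcov, hdis⟩, hd⟩
    set i0 : Fin r := ⟨0, hr⟩
    have key : ∀ j : Fin p, ∃ i, i ∈ msupp (v j) ∧ i ∉ Z i0 := by
      intro j
      by_contra hcon
      push_neg at hcon
      set b : Fin n → ℕ := fun i => if i ∈ msupp (v j) then max (a i0 i) (v j i) else a i0 i
        with hb
      have hbmem : b ∈ SInterval (a i0) (Z i0) := by
        constructor
        · intro i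
          rw [hb]
          dsimp only
          split_ifs
          · exact le_max_left _ _
          · exact le_refl _
        · intro i hi
          rw [hb]
          dsimp only
          rw [if_neg fun hms => hi (hcon i hms)]
      have hbM := hsubM i0 hbmem
      refine hbM.2 ⟨v j, ⟨j, rfl⟩, ?_⟩
      intro i
      by_cases hms : i ∈ msupp (v j)
      · rw [hb]; dsimp only; rw [if_pos hms]; exact le_max_right _ _
      · have hz : v j i = 0 := by
          by_contra h0
          exact hms (Finset.mem_filter.2 ⟨Finset.mem_univ _, h0⟩)
        rw [hz]; exact Nat.zero_le _
    choose f hf1 hf2 using key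
    have hinj : Function.Injective f := by
      intro j j' hjj
      by_contra hne'
      have hdj := hv.2 j j' hne'
      exact (Finset.disjoint_left.1 hdj (hf1 j)) (hjj ▸ hf1 j')
    have hcard : p ≤ n - (Z i0).card := by
      have h1 : Finset.univ.image f ⊆ Finset.univ \ Z i0 := by
        intro x hx
        obtain ⟨j, _, rfl⟩ := Finset.mem_image.1 hx
        exact Finset.mem_sdiff.2 ⟨Finset.mem_univ _, hf2 j⟩
      calc p = (Finset.univ.image f).card := by
            rw [Finset.card_image_of_injective _ hinj]; simp
        _ ≤ (Finset.univ \ Z i0).card := Finset.card_le_card h1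
        _ = n - (Z i0).card := by
            rw [Finset.card_sdiff_of_subset (Finset.subset_univ _)]; simp
    have hZn : (Z i0).card ≤ n := le_trans (Finset.card_le_univ _) (by simp)
    have hdi := hd i0
    omega
  · -- lower bound
    obtain ⟨c, hcu, -⟩ := id hMne
    obtain ⟨a0, ⟨k0, rfl⟩, hle0⟩ := hcu
    have hne0 : u k0 ≠ 0 := hu.1 k0
    rw [Function.ne_iff] at hne0
    obtain ⟨i₀, _⟩ := hne0
    have hκex : ∀ j, ∃ k, u k ≤ v j := by
      intro j
      have hvj : v j ∈ upSet (Set.range u) := hsub ⟨v j, ⟨j, rfl⟩, le_refl _⟩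
      obtain ⟨a, ⟨k, rfl⟩, hle⟩ := hvj
      exact ⟨k, hle⟩
    choose κ hκ using hκex
    have hκinj : Function.Injective κ := by
      intro j j' he
      by_contra hne'
      have hdj := hv.2 j j' hne'
      have hne0' : u (κ j) ≠ 0 := hu.1 _
      rw [Function.ne_iff] at hne0'
      obtain ⟨i, hi⟩ := hne0'
      have h1 : i ∈ msupp (v j) := by
        refine Finset.mem_filter.2 ⟨Finset.mem_univ _, ?_⟩
        have hle : u (κ j) i ≤ v j i := hκ j i
        simp only [Pi.zero_apply] at hi
        omega
      have h2 : i ∈ msupp (v j') := by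
        refine Finset.mem_filter.2 ⟨Finset.mem_univ _, ?_⟩
        have hle : u (κ j') i ≤ v j' i := hκ j' i
        rw [he] at hi
        simp only [Pi.zero_apply] at hi
        omega
      exact (Finset.disjoint_left.1 hdj h1) h2
    have hRcard : (Finset.univ \ Finset.image κ Finset.univ).card = q - p := by
      rw [Finset.card_sdiff_of_subset (Finset.subset_univ _), Finset.card_univ, Fintype.card_fin,
        Finset.card_image_of_injective _ hκinj, Finset.card_univ, Fintype.card_fin]
    obtain ⟨P, hP⟩ := Stmt14.bhkty (Finset.univ \ Finset.image κ Finset.univ)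
    have hPfull : ∀ T, T ⊆ Finset.univ \ Finset.image κ Finset.univ → T.Nonempty →
        (P T).1.Nonempty ∧ (P T).1 ⊆ T ∧ T ⊆ (P T).2 ∧
        (P T).2 ⊆ Finset.univ \ Finset.image κ Finset.univ ∧
        (Finset.univ \ Finset.image κ Finset.univ).card - (P T).2.card ≤
          (Finset.univ \ Finset.image κ Finset.univ).card / 2 ∧
        ∀ T', (P T).1 ⊆ T' → T' ⊆ (P T).2 → P T' = P T := hP
    exact Stmt14.Ctx.lower_bound ⟨u, v, κ, P, i₀, hκ, hRcard, hPfull⟩ hMne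
end

section
/- Let I ⊊ J ⊆ S be monomial complete intersection ideals with J generated by q monomials and I by p monomials, and suppose q = p + 1. Then sdepth_S(J/I) = n - p. -/
namespace SD15

open Finset

open scoped Classical

variable {n p : ℕ}

noncomputable def pick (i0 : Fin n) (F : Finset (Fin n)) : Fin n :=
  if h : F.Nonempty then F.min' h else i0

lemma pick_le {i0 : Fin n} {F : Finset (Fin n)} {i : Fin n} (h : i ∈ F) : pick i0 F ≤ i := by
  rw [pick, dif_pos ⟨i, h⟩]; exact F.min'_le i h

lemma pick_mem {i0 : Fin n} {F : Finset (Fin n)} (h : F.Nonempty) : pick i0 F ∈ F := by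
  rw [pick, dif_pos h]; exact F.min'_mem h

noncomputable def tgt (uu v : Fin p → Fin n → ℕ) (b : Fin n → ℕ) (j : Fin p) : Fin n → ℕ :=
  if uu j ≤ b then v j else uu j

noncomputable def selI (i0 : Fin n) (uu v : Fin p → Fin n → ℕ) (b : Fin n → ℕ) (j : Fin p) :
    Fin n :=
  pick i0 (Finset.univ.filter fun i => b i < tgt uu v b j i)

noncomputable def sel (i0 : Fin n) (uu v : Fin p → Fin n → ℕ) (b : Fin n → ℕ) (j : Fin p) :
    Fin n × ℕ × Bool :=
  (selI i0 uu v b j, b (selI i0 uu v b j), decide (uu j ≤ b))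

def MSet (uu v : Fin p → Fin n → ℕ) (w : Fin n → ℕ) : Set (Fin n → ℕ) :=
  {b | ((∃ j, uu j ≤ b) ∨ w ≤ b) ∧ ∀ j, ¬ v j ≤ b}

lemma tgt_le_v {uu v : Fin p → Fin n → ℕ} (huuv : ∀ j, uu j ≤ v j) (b : Fin n → ℕ) (j : Fin p) :
    tgt uu v b j ≤ v j := by
  unfold tgt; split
  · exact le_refl _
  · exact huuv j

lemma filter_ne {uu v : Fin p → Fin n → ℕ} {b : Fin n → ℕ} {j : Fin p} (hbv : ¬ v j ≤ b) :
    (Finset.univ.filter fun i => b i < tgt uu v b j i).Nonempty := by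
  unfold tgt; split
  case isTrue h =>
    rw [Pi.le_def] at hbv; push_neg at hbv
    obtain ⟨i, hi⟩ := hbv
    exact ⟨i, by simp [hi]⟩
  case isFalse h =>
    rw [Pi.le_def] at h; push_neg at h
    obtain ⟨i, hi⟩ := h
    exact ⟨i, by simp [hi]⟩

lemma selI_lt {i0 : Fin n} {uu v : Fin p → Fin n → ℕ} {b : Fin n → ℕ} {j : Fin p}
    (hbv : ¬ v j ≤ b) :
    b (selI i0 uu v b j) < tgt uu v b j (selI i0 uu v b j) := by
  have := pick_mem (i0 := i0) (filter_ne (uu := uu) hbv)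
  rw [Finset.mem_filter] at this
  exact this.2

lemma selI_min {i0 : Fin n} {uu v : Fin p → Fin n → ℕ} {b : Fin n → ℕ} {j : Fin p} {i : Fin n}
    (h : b i < tgt uu v b j i) : selI i0 uu v b j ≤ i :=
  pick_le (Finset.mem_filter.2 ⟨Finset.mem_univ _, h⟩)

lemma selI_msupp {i0 : Fin n} {uu v : Fin p → Fin n → ℕ} {b : Fin n → ℕ} {j : Fin p}
    (huuv : ∀ j, uu j ≤ v j) (hbv : ¬ v j ≤ b) :
    selI i0 uu v b j ∈ msupp (v j) := by
  have h1 := selI_lt (i0 := i0) (uu := uu) hbv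
  have h2 := tgt_le_v huuv b j
  have h2' : tgt uu v b j (selI i0 uu v b j) ≤ v j (selI i0 uu v b j) := h2 _
  simp only [msupp, Finset.mem_filter, Finset.mem_univ, true_and]
  omega


noncomputable def ZZ (s : Fin p → Fin n × ℕ × Bool) : Finset (Fin n) :=
  Finset.univ \ Finset.image (fun j => (s j).1) Finset.univ

noncomputable def contrib (uu v : Fin p → Fin n → ℕ) (s : Fin p → Fin n × ℕ × Bool)
    (j : Fin p) (x : Fin n) : ℕ :=
  if (s j).1 = x then (s j).2.1
  else if (s j).2.2 = true then max (if x < (s j).1 then v j x else 0) (uu j x)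
  else if x < (s j).1 then uu j x else 0

noncomputable def base (uu v : Fin p → Fin n → ℕ) (w : Fin n → ℕ)
    (s : Fin p → Fin n × ℕ × Bool) (x : Fin n) : ℕ :=
  max (Finset.univ.sup fun j => contrib uu v s j x)
    (if ∀ j, (s j).2.2 = false then w x else 0)

section Realized

variable {i0 : Fin n} {uu v : Fin p → Fin n → ℕ} {w b : Fin n → ℕ}

lemma allF_w (hb : b ∈ MSet uu v w)
    (hall : ∀ j, (sel i0 uu v b j).2.2 = false) : w ≤ b := by
  rcases hb.1 with h | h
  · obtain ⟨j, hj⟩ := h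
    have := hall j
    simp only [sel, decide_eq_false_iff_not] at this
    exact absurd hj this
  · exact h

lemma base_le (hb : b ∈ MSet uu v w) : base uu v w (sel i0 uu v b) ≤ b := by
  intro x
  apply max_le
  · apply Finset.sup_le
    intro j _
    unfold contrib
    by_cases h1 : (sel i0 uu v b j).1 = x
    · rw [if_pos h1]
      show (sel i0 uu v b j).2.1 ≤ b x
      rw [← h1]
      exact le_refl _
    · rw [if_neg h1]
      by_cases h2 : (sel i0 uu v b j).2.2 = true
      · rw [if_pos h2]
        have ht : uu j ≤ b := by simpa [sel] using h2
        apply max_le _ (ht x)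
        by_cases hlt : x < (sel i0 uu v b j).1
        · rw [if_pos hlt]
          by_contra hc
          push_neg at hc
          have heq : tgt uu v b j x = v j x := by unfold tgt; rw [if_pos ht]
          have hmin := selI_min (i0 := i0) (j := j) (b := b) (v := v) (by rw [heq]; exact hc)
          have hx : selI i0 uu v b j < selI i0 uu v b j := lt_of_le_of_lt hmin hlt
          exact absurd hx (lt_irrefl _)
        · rw [if_neg hlt]
          exact Nat.zero_le _
      · rw [if_neg h2]
        have ht : ¬ uu j ≤ b := by simpa [sel] using h2
        by_cases hlt : x < (sel i0 uu v b j).1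
        · rw [if_pos hlt]
          by_contra hc
          push_neg at hc
          have heq : tgt uu v b j x = uu j x := by unfold tgt; rw [if_neg ht]
          have hmin := selI_min (i0 := i0) (j := j) (b := b) (v := v) (by rw [heq]; exact hc)
          have hx : selI i0 uu v b j < selI i0 uu v b j := lt_of_le_of_lt hmin hlt
          exact absurd hx (lt_irrefl _)
        · rw [if_neg hlt]
          exact Nat.zero_le _
  · by_cases hall : ∀ j, (sel i0 uu v b j).2.2 = false
    · rw [if_pos hall]
      exact allF_w hb hall x
    · rw [if_neg hall]
      exact Nat.zero_le _

lemma contrib_self (j : Fin p) :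
    contrib uu v (sel i0 uu v b) j ((sel i0 uu v b j).1) = b ((sel i0 uu v b j).1) := by
  unfold contrib
  rw [if_pos rfl]
  rfl

lemma base_pin (hb : b ∈ MSet uu v w) (j : Fin p) :
    base uu v w (sel i0 uu v b) ((sel i0 uu v b j).1) = b ((sel i0 uu v b j).1) := by
  apply le_antisymm (base_le hb _)
  calc b ((sel i0 uu v b j).1) = contrib uu v (sel i0 uu v b) j ((sel i0 uu v b j).1) :=
        (contrib_self j).symm
    _ ≤ Finset.univ.sup (fun j' => contrib uu v (sel i0 uu v b) j' ((sel i0 uu v b j).1)) :=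
        Finset.le_sup (f := fun j' => contrib uu v (sel i0 uu v b) j' ((sel i0 uu v b j).1))
          (Finset.mem_univ j)
    _ ≤ _ := le_max_left _ _

lemma mem_interval_self (hb : b ∈ MSet uu v w) :
    b ∈ SInterval (base uu v w (sel i0 uu v b)) (ZZ (sel i0 uu v b)) := by
  refine ⟨base_le hb, ?_⟩
  intro x hx
  simp only [ZZ, Finset.mem_sdiff, Finset.mem_univ, true_and, not_not,
    Finset.mem_image] at hx
  obtain ⟨j, hj⟩ := hx
  rw [← hj]
  exact (base_pin hb j).symm

@[simp] lemma sel_fst {j : Fin p} : (sel i0 uu v b j).1 = selI i0 uu v b j := rfl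
@[simp] lemma sel_snd {j : Fin p} : (sel i0 uu v b j).2.1 = b (selI i0 uu v b j) := rfl
@[simp] lemma sel_bool {j : Fin p} : (sel i0 uu v b j).2.2 = decide (uu j ≤ b) := rfl

variable {x : Fin n → ℕ}

lemma pin_not_ZZ (j : Fin p) : selI i0 uu v b j ∉ ZZ (sel i0 uu v b) := by
  simp only [ZZ, Finset.mem_sdiff, Finset.mem_univ, true_and, not_not, Finset.mem_image]
  exact ⟨j, rfl⟩

lemma x_pin (hb : b ∈ MSet uu v w)
    (hx : x ∈ SInterval (base uu v w (sel i0 uu v b)) (ZZ (sel i0 uu v b))) (j : Fin p) :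
    x (selI i0 uu v b j) = b (selI i0 uu v b j) := by
  rw [hx.2 _ (pin_not_ZZ j)]
  exact base_pin hb j

lemma contrib_le_x (hx : x ∈ SInterval (base uu v w (sel i0 uu v b)) (ZZ (sel i0 uu v b)))
    (j : Fin p) (y : Fin n) : contrib uu v (sel i0 uu v b) j y ≤ x y :=
  le_trans (le_trans (Finset.le_sup (f := fun j' => contrib uu v (sel i0 uu v b) j' y)
    (Finset.mem_univ j)) (le_max_left _ _)) (hx.1 y)

lemma uu_le_x (hb : b ∈ MSet uu v w)
    (hx : x ∈ SInterval (base uu v w (sel i0 uu v b)) (ZZ (sel i0 uu v b)))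
    {j : Fin p} (ht : uu j ≤ b) : uu j ≤ x := by
  intro y
  by_cases hy : selI i0 uu v b j = y
  · rw [← hy, x_pin hb hx j]
    exact ht _
  · refine le_trans ?_ (contrib_le_x hx j y)
    unfold contrib
    rw [if_neg (by simpa using hy), if_pos (by simp [ht])]
    exact le_max_right _ _

lemma not_uu_le_x (hb : b ∈ MSet uu v w)
    (hx : x ∈ SInterval (base uu v w (sel i0 uu v b)) (ZZ (sel i0 uu v b)))
    {j : Fin p} (ht : ¬ uu j ≤ b) : ¬ uu j ≤ x := by
  intro hc
  have h1 := x_pin hb hx j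
  have h2 := selI_lt (i0 := i0) (uu := uu) (hb.2 j)
  rw [show tgt uu v b j = uu j by unfold tgt; rw [if_neg ht]] at h2
  have h3 : uu j (selI i0 uu v b j) ≤ x (selI i0 uu v b j) := hc _
  omega

lemma not_v_le_x (hb : b ∈ MSet uu v w) (huuv : ∀ j, uu j ≤ v j)
    (hx : x ∈ SInterval (base uu v w (sel i0 uu v b)) (ZZ (sel i0 uu v b)))
    (j : Fin p) : ¬ v j ≤ x := by
  intro hc
  have h1 := x_pin hb hx j
  have h2 := selI_lt (i0 := i0) (uu := uu) (hb.2 j)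
  have h3 : tgt uu v b j (selI i0 uu v b j) ≤ v j (selI i0 uu v b j) := tgt_le_v huuv b j _
  have h4 : v j (selI i0 uu v b j) ≤ x (selI i0 uu v b j) := hc _
  omega

lemma x_mem (hb : b ∈ MSet uu v w) (huuv : ∀ j, uu j ≤ v j)
    (hx : x ∈ SInterval (base uu v w (sel i0 uu v b)) (ZZ (sel i0 uu v b))) :
    x ∈ MSet uu v w := by
  refine ⟨?_, fun j => not_v_le_x hb huuv hx j⟩
  by_cases hall : ∀ j, (sel i0 uu v b j).2.2 = false
  · right
    intro y
    by_cases hy : ∃ j, selI i0 uu v b j = y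
    · obtain ⟨j, hj⟩ := hy
      rw [← hj, x_pin hb hx j]
      exact allF_w hb hall _
    · refine le_trans ?_ (hx.1 y)
      unfold base
      rw [if_pos hall]
      exact le_max_right _ _
  · left
    push_neg at hall
    obtain ⟨j, hj⟩ := hall
    have ht : uu j ≤ b := by
      have := eq_true_of_ne_false hj
      simpa using this
    exact ⟨j, uu_le_x hb hx ht⟩

lemma sel_stable (hb : b ∈ MSet uu v w) (huuv : ∀ j, uu j ≤ v j)
    (hvd : ∀ j k, j ≠ k → Disjoint (msupp (v j)) (msupp (v k)))
    (hx : x ∈ SInterval (base uu v w (sel i0 uu v b)) (ZZ (sel i0 uu v b))) :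
    sel i0 uu v x = sel i0 uu v b := by
  funext j
  have hdec : (uu j ≤ x) ↔ (uu j ≤ b) := by
    constructor
    · intro h
      by_contra hnb
      exact not_uu_le_x hb hx hnb h
    · intro h
      exact uu_le_x hb hx h
  have htgt : tgt uu v x j = tgt uu v b j := by
    unfold tgt
    by_cases h : uu j ≤ b
    · rw [if_pos h, if_pos (hdec.2 h)]
    · rw [if_neg h, if_neg (fun hc => h (hdec.1 hc))]
  have hxpin := x_pin hb hx j
  have hblt := selI_lt (i0 := i0) (uu := uu) (hb.2 j)
  have hI : selI i0 uu v x j = selI i0 uu v b j := by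
    apply le_antisymm
    · exact selI_min (by rw [htgt, hxpin]; exact hblt)
    · have hxv : ¬ v j ≤ x := not_v_le_x hb huuv hx j
      have hi'lt : x (selI i0 uu v x j) < tgt uu v b j (selI i0 uu v x j) := by
        rw [← htgt]; exact selI_lt hxv
      set i' := selI i0 uu v x j with hi'def
      by_contra hcon
      push_neg at hcon
      by_cases hpin : ∃ j', selI i0 uu v b j' = i'
      · obtain ⟨j', hj'⟩ := hpin
        have hjj : j' ≠ j := by
          intro h
          subst h
          rw [hj'] at hcon
          exact absurd hcon (lt_irrefl _)
        have h1 : i' ∈ msupp (v j') := by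
          rw [← hj']
          exact selI_msupp huuv (hb.2 j')
        have h2 : i' ∈ msupp (v j) := by
          have h3 : tgt uu v b j i' ≤ v j i' := tgt_le_v huuv b j i'
          simp only [msupp, Finset.mem_filter, Finset.mem_univ, true_and]
          omega
        exact Finset.disjoint_left.mp (hvd j' j hjj) h1 h2
      · have hc := contrib_le_x hx j i'
        have hne : (sel i0 uu v b j).1 ≠ i' := fun h => hpin ⟨j, h⟩
        unfold contrib at hc
        rw [if_neg hne] at hc
        by_cases ht : uu j ≤ b
        · rw [if_pos (by simp [ht]), if_pos (by simpa using hcon)] at hc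
          have : tgt uu v b j i' = v j i' := by unfold tgt; rw [if_pos ht]
          rw [this] at hi'lt
          have := le_trans (le_max_left _ (uu j i')) hc
          omega
        · rw [if_neg (by simp [ht]), if_pos (by simpa using hcon)] at hc
          have : tgt uu v b j i' = uu j i' := by unfold tgt; rw [if_neg ht]
          rw [this] at hi'lt
          omega
  show (selI i0 uu v x j, x (selI i0 uu v x j), decide (uu j ≤ x))
      = (selI i0 uu v b j, b (selI i0 uu v b j), decide (uu j ≤ b))
  rw [hI, hxpin, decide_eq_decide.mpr hdec]

end Realized

lemma ZZ_card (s : Fin p → Fin n × ℕ × Bool) : n - p ≤ (ZZ s).card := by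
  have h1 : (Finset.image (fun j => (s j).1) Finset.univ).card ≤ p :=
    le_trans Finset.card_image_le (by simp)
  rw [ZZ, Finset.card_sdiff_of_subset (Finset.subset_univ _)]
  simp only [Finset.card_univ, Fintype.card_fin]
  omega

lemma sel_image_finite {i0 : Fin n} {uu v : Fin p → Fin n → ℕ} {w : Fin n → ℕ}
    (huuv : ∀ j, uu j ≤ v j) :
    (sel i0 uu v '' MSet uu v w).Finite := by
  set B := (Finset.univ.sup fun j => Finset.univ.sup (v j)) + 1 with hB
  refine Set.Finite.subset (Set.Finite.pi (t := fun _ : Fin p =>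
    ((Set.univ : Set (Fin n)) ×ˢ ((Set.Iio B : Set ℕ) ×ˢ (Set.univ : Set Bool))))
    fun _ => Set.finite_univ.prod ((Set.finite_Iio B).prod Set.finite_univ)) ?_
  rintro s ⟨b, hb, rfl⟩
  intro j _
  refine ⟨Set.mem_univ _, ?_, Set.mem_univ _⟩
  show b (selI i0 uu v b j) < B
  have h2 := selI_lt (i0 := i0) (uu := uu) (hb.2 j)
  have h3 : tgt uu v b j (selI i0 uu v b j) ≤ v j (selI i0 uu v b j) := tgt_le_v huuv b j _
  have h4 : v j (selI i0 uu v b j) ≤ Finset.univ.sup (v j) :=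
    Finset.le_sup (Finset.mem_univ _)
  have h5 : Finset.univ.sup (v j) ≤ Finset.univ.sup fun j => Finset.univ.sup (v j) :=
    Finset.le_sup (f := fun j => Finset.univ.sup (v j)) (Finset.mem_univ j)
  omega

lemma construct (hn : 0 < n) (uu v : Fin p → Fin n → ℕ) (w : Fin n → ℕ)
    (huuv : ∀ j, uu j ≤ v j)
    (hvd : ∀ j k, j ≠ k → Disjoint (msupp (v j)) (msupp (v k)))
    (hMne : (MSet uu v w).Nonempty) :
    ∃ r, 0 < r ∧ ∃ (a : Fin r → Fin n → ℕ) (Z : Fin r → Finset (Fin n)),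
      IsStanleyDecompOn Finset.univ (MSet uu v w) a Z ∧ ∀ i, n - p ≤ (Z i).card := by
  set i0 : Fin n := ⟨0, hn⟩
  have hfin := sel_image_finite (i0 := i0) (w := w) huuv
  obtain ⟨b0, hb0⟩ := hMne
  have hTne : hfin.toFinset.Nonempty :=
    ⟨sel i0 uu v b0, hfin.mem_toFinset.2 ⟨b0, hb0, rfl⟩⟩
  let e := hfin.toFinset.equivFin
  have hrep : ∀ i, ∃ b ∈ MSet uu v w,
      sel i0 uu v b = ((e.symm i : hfin.toFinset) : Fin p → Fin n × ℕ × Bool) :=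
    fun i => hfin.mem_toFinset.1 (e.symm i).2
  refine ⟨hfin.toFinset.card, Finset.card_pos.2 hTne,
    fun i => base uu v w ((e.symm i : hfin.toFinset) : Fin p → Fin n × ℕ × Bool),
    fun i => ZZ ((e.symm i : hfin.toFinset) : Fin p → Fin n × ℕ × Bool),
    ⟨fun i => Finset.subset_univ _, ?_, ?_, ?_⟩, fun i => ZZ_card _⟩
  · intro i x hx
    obtain ⟨b, hb, hsb⟩ := hrep i
    have hx' : x ∈ SInterval (base uu v w (sel i0 uu v b)) (ZZ (sel i0 uu v b)) := by
      rw [hsb]; exact hx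
    exact x_mem hb huuv hx'
  · intro x hxM
    have hmem : sel i0 uu v x ∈ hfin.toFinset := hfin.mem_toFinset.2 ⟨x, hxM, rfl⟩
    refine ⟨e ⟨sel i0 uu v x, hmem⟩, ?_⟩
    simpa only [Equiv.symm_apply_apply] using mem_interval_self hxM
  · intro i j hij
    obtain ⟨bi, hbi, hsi⟩ := hrep i
    obtain ⟨bj, hbj, hsj⟩ := hrep j
    rw [Set.disjoint_left]
    intro x hxi hxj
    have hxi' : x ∈ SInterval (base uu v w (sel i0 uu v bi)) (ZZ (sel i0 uu v bi)) := by
      rw [hsi]; exact hxi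
    have hxj' : x ∈ SInterval (base uu v w (sel i0 uu v bj)) (ZZ (sel i0 uu v bj)) := by
      rw [hsj]; exact hxj
    have h1 := sel_stable hbi huuv hvd hxi'
    have h2 := sel_stable hbj huuv hvd hxj'
    have h3 : e.symm i = e.symm j := Subtype.ext (by rw [← hsi, ← hsj, ← h1, ← h2])
    exact hij (by simpa using congrArg e h3)

lemma upper {M : Set (Fin n → ℕ)} (v : Fin p → Fin n → ℕ)
    (hvd : ∀ j k, j ≠ k → Disjoint (msupp (v j)) (msupp (v k)))
    (hMv : ∀ b ∈ M, ∀ j, ¬ v j ≤ b) {d : ℕ}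
    (hd : ∃ r, 0 < r ∧ ∃ (a : Fin r → Fin n → ℕ) (Z : Fin r → Finset (Fin n)),
      IsStanleyDecompOn Finset.univ M a Z ∧ ∀ i, d ≤ (Z i).card) :
    d ≤ n - p := by
  obtain ⟨r, hr, a, Z, hdec, hdZ⟩ := hd
  set i0 : Fin r := ⟨0, hr⟩
  have hbase : a i0 ∈ M := hdec.2.1 i0 ⟨le_refl _, fun _ _ => rfl⟩
  have hch : ∀ j : Fin p, ∃ i : Fin n, i ∉ Z i0 ∧ a i0 i < v j i := by
    intro j
    by_contra hcon
    push_neg at hcon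
    set b : Fin n → ℕ := fun i => max (a i0 i) (v j i) with hbdef
    have hbmem : b ∈ SInterval (a i0) (Z i0) := by
      refine ⟨fun i => le_max_left _ _, fun i hi => ?_⟩
      have := hcon i hi
      simp only [hbdef]
      omega
    have hvb : v j ≤ b := fun i => le_max_right _ _
    exact hMv b (hdec.2.1 i0 hbmem) j hvb
  choose ι hι1 hι2 using hch
  have hinj : Function.Injective ι := by
    intro j j' h
    by_contra hne
    have m1 : ι j ∈ msupp (v j) := by
      simp only [msupp, Finset.mem_filter, Finset.mem_univ, true_and]
      have := hι2 j; omega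
    have m2 : ι j ∈ msupp (v j') := by
      rw [h]
      simp only [msupp, Finset.mem_filter, Finset.mem_univ, true_and]
      have := hι2 j'; omega
    exact Finset.disjoint_left.mp (hvd j j' hne) m1 m2
  have hsubZ : Finset.image ι Finset.univ ⊆ Finset.univ \ Z i0 := by
    intro i hi
    simp only [Finset.mem_image] at hi
    obtain ⟨j, _, rfl⟩ := hi
    simp [hι1 j]
  have hcard1 : p ≤ (Finset.univ \ Z i0).card := by
    calc p = (Finset.image ι Finset.univ).card := by
          rw [Finset.card_image_of_injective _ hinj]; simp
      _ ≤ _ := Finset.card_le_card hsubZ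
  have hcard2 : (Finset.univ \ Z i0).card = n - (Z i0).card := by
    rw [Finset.card_sdiff_of_subset (Finset.subset_univ _)]; simp
  have hZn : (Z i0).card ≤ n := by
    have := Finset.card_le_card (Finset.subset_univ (Z i0))
    simpa using this
  have := hdZ i0
  omega

end SD15

/-- for monomial complete intersections `I ⊊ J ⊆ S` with
`q = p + 1`, `sdepth_S(J/I) = n - p`. -/
theorem stmt_15 {n p q : ℕ} (hq : q = p + 1)
    (u : Fin q → Fin n → ℕ) (v : Fin p → Fin n → ℕ)
    (hu : IsRegSeqM u) (hv : IsRegSeqM v)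
    (hsub : upSet (Set.range v) ⊆ upSet (Set.range u))
    (hne : upSet (Set.range v) ≠ upSet (Set.range u)) :
    sdepth (upSet (Set.range u) \ upSet (Set.range v)) = n - p := by
  subst hq
  have hn : 0 < n := by
    rcases Nat.eq_zero_or_pos n with h | h
    · exfalso
      apply hu.1 0
      subst h
      funext i
      exact i.elim0
    · exact h
  have hσex : ∀ j, ∃ k, u k ≤ v j := by
    intro j
    obtain ⟨a, ⟨k, rfl⟩, hle⟩ := hsub ⟨v j, ⟨j, rfl⟩, le_refl _⟩
    exact ⟨k, hle⟩
  choose σ hσ using hσex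
  have husupp : ∀ k : Fin (p+1), ∃ i, u k i ≠ 0 := by
    intro k
    by_contra h
    push_neg at h
    exact hu.1 k (funext h)
  have hσinj : Function.Injective σ := by
    intro j j' h
    by_contra hne'
    obtain ⟨i, hi⟩ := husupp (σ j)
    have m1 : i ∈ msupp (v j) := by
      simp only [msupp, Finset.mem_filter, Finset.mem_univ, true_and]
      have h1 : u (σ j) i ≤ v j i := hσ j i
      omega
    have m2 : i ∈ msupp (v j') := by
      simp only [msupp, Finset.mem_filter, Finset.mem_univ, true_and]
      have h2 : u (σ j') i ≤ v j' i := hσ j' i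
      rw [← h] at h2
      omega
    exact Finset.disjoint_left.mp (hv.2 j j' hne') m1 m2
  have hk0ex : ∃ k0 : Fin (p+1), ∀ j, σ j ≠ k0 := by
    by_contra h
    push_neg at h
    have hsurj : Function.Surjective σ := fun k => by
      obtain ⟨j, hj⟩ := h k
      exact ⟨j, hj⟩
    have := Fintype.card_le_of_surjective σ hsurj
    simp at this
  obtain ⟨k0, hk0⟩ := hk0ex
  have huniq : ∀ k : Fin (p+1), (∀ j, σ j ≠ k) → k = k0 := by
    intro k hk
    by_contra hne'
    have hk0im : k0 ∉ Finset.image σ Finset.univ := by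
      simp only [Finset.mem_image, not_exists]
      intro j
      simp [hk0 j]
    have hkim : k ∉ insert k0 (Finset.image σ Finset.univ) := by
      simp only [Finset.mem_insert, Finset.mem_image, not_or, not_exists]
      refine ⟨hne', fun j => by simp [hk j]⟩
    have hc := Finset.card_le_card
      (Finset.subset_univ (insert k (insert k0 (Finset.image σ Finset.univ))))
    rw [Finset.card_insert_of_notMem hkim, Finset.card_insert_of_notMem hk0im,
      Finset.card_image_of_injective _ hσinj] at hc
    simp at hc
  set uu : Fin p → Fin n → ℕ := fun j => u (σ j) with huu
  set w := u k0 with hw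
  have hM : upSet (Set.range u) \ upSet (Set.range v) = SD15.MSet uu v w := by
    ext b
    simp only [Set.mem_diff, upSet, Set.mem_setOf_eq, SD15.MSet]
    constructor
    · rintro ⟨⟨a, ⟨k, rfl⟩, hle⟩, hnv⟩
      refine ⟨?_, fun j hj => hnv ⟨v j, ⟨j, rfl⟩, hj⟩⟩
      by_cases hk : ∃ j, σ j = k
      · obtain ⟨j, rfl⟩ := hk
        exact Or.inl ⟨j, hle⟩
      · push_neg at hk
        rw [huniq k hk] at hle
        exact Or.inr hle
    · rintro ⟨h1, h2⟩
      refine ⟨?_, ?_⟩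
      · rcases h1 with ⟨j, hj⟩ | hw'
        · exact ⟨u (σ j), ⟨σ j, rfl⟩, hj⟩
        · exact ⟨u k0, ⟨k0, rfl⟩, hw'⟩
      · rintro ⟨a, ⟨j, rfl⟩, hle⟩
        exact h2 j hle
  have hMne : (SD15.MSet uu v w).Nonempty := by
    rw [← hM]
    obtain ⟨b, hb⟩ := Set.exists_of_ssubset (hsub.ssubset_of_ne hne)
    exact ⟨b, hb⟩
  rw [hM]
  have hkey := SD15.construct hn uu v w (fun j => hσ j) hv.2 hMne
  unfold sdepth sdepthOn
  apply le_antisymm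
  · exact csSup_le ⟨n - p, hkey⟩
      (fun d hd => SD15.upper v hv.2 (fun b hb j => hb.2 j) hd)
  · exact le_csSup ⟨n - p, fun d hd => SD15.upper v hv.2 (fun b hb j => hb.2 j) hd⟩ hkey
end

section
/- Let I ⊆ J ⊆ S be monomial ideals and u ∈ S a monomial. Then either (I : u) = (J : u), or sdepth_S((J : u)/(I : u)) ≥ sdepth_S(J/I). -/
/- Translating by `u` pulls a Stanley decomposition of `J/I` back to one of `(J : u)/(I : u)`:
`c ↦ u + c` maps `x^{a-u} K[Z]` onto `x^a K[Z] ∩ (u + ℕⁿ)` whenever `u ≤ a` outside `Z`, and the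
Stanley spaces violating this condition miss `u + ℕⁿ` altogether. So every Stanley decomposition
of `J/I` yields one of `(J : u)/(I : u)` using a subfamily of the same variable sets `Zᵢ`, which
is nonempty as soon as `(J : u) ≠ (I : u)`. -/

lemma le_of_add_mem_sInterval {n : ℕ} {u a c : Fin n → ℕ} {Z : Finset (Fin n)}
    (h : u + c ∈ SInterval a Z) : ∀ j ∉ Z, u j ≤ a j := by
  intro j hj
  have := h.2 j hj
  simp only [Pi.add_apply] at this
  omega

lemma mem_sInterval_sub_iff {n : ℕ} {u a : Fin n → ℕ} {Z : Finset (Fin n)}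
    (h : ∀ j ∉ Z, u j ≤ a j) (c : Fin n → ℕ) :
    c ∈ SInterval (a - u) Z ↔ u + c ∈ SInterval a Z := by
  simp only [SInterval, Set.mem_ofPred_eq, Pi.le_def, Pi.sub_apply, Pi.add_apply]
  constructor
  · rintro ⟨hle, heq⟩
    exact ⟨fun j => by have := hle j; omega,
      fun j hj => by have := heq j hj; have := h j hj; omega⟩
  · rintro ⟨hle, heq⟩
    exact ⟨fun j => by have := hle j; omega, fun j hj => by have := heq j hj; omega⟩

lemma IsStanleyDecompOn.exists_preimage_add {n r : ℕ} {V : Finset (Fin n)}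
    {M : Set (Fin n → ℕ)} {a : Fin r → Fin n → ℕ} {Z : Fin r → Finset (Fin n)}
    (hdec : IsStanleyDecompOn V M a Z) (u : Fin n → ℕ) :
    ∃ (s : ℕ) (f : Fin s → Fin r),
      IsStanleyDecompOn V {c | u + c ∈ M} (fun k => a (f k) - u) (fun k => Z (f k)) := by
  classical
  obtain ⟨hZV, hsubM, hcov, hdisj⟩ := hdec
  set G : Finset (Fin r) := Finset.univ.filter fun i => ∀ j ∉ Z i, u j ≤ a i j
  let f : Fin G.card → Fin r := fun k => G.equivFin.symm k
  have hgood : ∀ k, ∀ j ∉ Z (f k), u j ≤ a (f k) j := fun k =>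
    (Finset.mem_filter.mp (G.equivFin.symm k).2).2
  refine ⟨G.card, f, fun k => hZV _, fun k c hc => ?_, fun x hx => ?_, fun k l hkl => ?_⟩
  · exact hsubM _ ((mem_sInterval_sub_iff (hgood k) c).mp hc)
  · obtain ⟨i, hi⟩ := hcov _ hx
    have hiG : i ∈ G := Finset.mem_filter.mpr ⟨Finset.mem_univ _, le_of_add_mem_sInterval hi⟩
    refine ⟨G.equivFin ⟨i, hiG⟩, ?_⟩
    simpa [f] using (mem_sInterval_sub_iff (Finset.mem_filter.mp hiG).2 x).mpr hi
  · have hne : f k ≠ f l := fun h => hkl (G.equivFin.symm.injective (Subtype.ext h))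
    refine Set.disjoint_left.mpr fun c hck hcl => ?_
    exact Set.disjoint_left.mp (hdisj _ _ hne) ((mem_sInterval_sub_iff (hgood k) c).mp hck)
      ((mem_sInterval_sub_iff (hgood l) c).mp hcl)

lemma bddAbove_sdepthOn_set {n : ℕ} (V : Finset (Fin n)) (M : Set (Fin n → ℕ)) :
    BddAbove {d | ∃ (r : ℕ), 0 < r ∧ ∃ (a : Fin r → Fin n → ℕ) (Z : Fin r → Finset (Fin n)),
      IsStanleyDecompOn V M a Z ∧ ∀ i, d ≤ (Z i).card} := by
  refine ⟨n, fun d ⟨r, hr, a, Z, _, hcard⟩ => ?_⟩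
  calc d ≤ (Z ⟨0, hr⟩).card := hcard _
    _ ≤ Fintype.card (Fin n) := Finset.card_le_univ _
    _ = n := Fintype.card_fin n

lemma sdepthOn_le_sdepthOn_preimage_add {n : ℕ} (V : Finset (Fin n)) {M : Set (Fin n → ℕ)}
    {u : Fin n → ℕ} (hne : {c | u + c ∈ M}.Nonempty) :
    sdepthOn V M ≤ sdepthOn V {c | u + c ∈ M} := by
  unfold sdepthOn
  refine csSup_le_csSup' (bddAbove_sdepthOn_set V _) ?_
  rintro d ⟨r, -, a, Z, hdec, hcard⟩
  obtain ⟨s, f, hdec'⟩ := hdec.exists_preimage_add u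
  obtain ⟨c, hc⟩ := hne
  obtain ⟨k, -⟩ := hdec'.2.2.1 c hc
  exact ⟨s, k.pos, _, _, hdec', fun k => hcard (f k)⟩

theorem stmt_19_general {n : ℕ} (I J : Set (Fin n → ℕ)) (hIJ : I ⊆ J) (u : Fin n → ℕ) :
    {c : Fin n → ℕ | u + c ∈ I} = {c | u + c ∈ J} ∨
      sdepth (J \ I) ≤
        sdepth ({c : Fin n → ℕ | u + c ∈ J} \ {c | u + c ∈ I}) := by
  rcases Set.eq_empty_or_nonempty ({c : Fin n → ℕ | u + c ∈ J} \ {c | u + c ∈ I})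
    with hempty | hne
  · exact Or.inl <| Set.Subset.antisymm (fun c hc => hIJ hc) (Set.sdiff_eq_empty.mp hempty)
  · exact Or.inr <| sdepthOn_le_sdepthOn_preimage_add Finset.univ (M := J \ I) hne

/-- for monomial ideals `I ⊆ J ⊆ S` and a monomial `u`, either
`(I : u) = (J : u)`, or `sdepth_S((J : u)/(I : u)) ≥ sdepth_S(J/I)`. -/
theorem stmt_19 {n : ℕ} (I J : Set (Fin n → ℕ)) (hI : IsMonomialIdealSet I)
    (hJ : IsMonomialIdealSet J) (hIJ : I ⊆ J) (u : Fin n → ℕ) :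
    {c : Fin n → ℕ | u + c ∈ I} = {c | u + c ∈ J} ∨
      sdepth (J \ I) ≤
        sdepth ({c : Fin n → ℕ | u + c ∈ J} \ {c | u + c ∈ I}) :=
  stmt_19_general I J hIJ u
end
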